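/- arXiv:2101.11397 — 7 statements merged into one kernel-verified Lean document; each statement's English description precedes it below -/
import Mathlib

section
/- Let μ : (0,∞) → [0,∞) be integrable and non-increasing, and for s ∈ ℝ, s ≠ 0, define ℓ(is) = 1 + (1/(is)) ∫_0^∞ μ(r)(1 - e^{-isr}) dr. Then Re ℓ(is) ≥ 1 for all s ≠ 0. -/
/-!
Since `Re ℓ(is) = 1 + (1/s) ∫₀^∞ μ(r) sin(sr) dr`, it suffices to show that this sine integral has
the sign of `s`; by oddness of `sin` we may take `s > 0`. Cut `(0, ∞)` into periods of `sin(s·)`.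
On a period `[a, a + 2π/s]` the second half is minus the first half shifted by `π/s`, so the
integral over the period is `∫₀^{π/s} (μ(a+u) - μ(a+u+π/s)) sin(su) du ≥ 0` because `μ` is
non-increasing. Summing over periods and passing to the limit gives the claim.
-/

open MeasureTheory Set Complex Real Filter

theorem MeasureTheory.IntegrableOn.mul_sin_mul {f : ℝ → ℝ} {t : Set ℝ}
    (hf : IntegrableOn f t) (s : ℝ) : IntegrableOn (fun r => f r * Real.sin (s * r)) t :=
  hf.mul_bdd (by fun_prop) (ae_of_all _ fun r => by simpa using abs_sin_le_one (s * r))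

theorem MeasureTheory.IntegrableOn.intervalIntegrable_of_Ioi {E : Type*} [NormedAddCommGroup E]
    {g : ℝ → E} {ν : Measure ℝ} {c a b : ℝ} (hg : IntegrableOn g (Ioi c) ν) (ha : c ≤ a)
    (hb : c ≤ b) : IntervalIntegrable g ν a b :=
  intervalIntegrable_iff.2 <| hg.mono_set fun _ hx => (le_min ha hb).trans_lt hx.1

theorem intervalIntegral_antitone_mul_sin_nonneg {f : ℝ → ℝ} {s : ℝ} (hs : 0 < s)
    (hf : AntitoneOn f (Ioo 0 (2 * π / s)))
    (hfi : IntervalIntegrable f volume 0 (2 * π / s)) :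
    0 ≤ ∫ u in (0)..(2 * π / s), f u * Real.sin (s * u) := by
  set T := π / s
  have hT : 0 < T := by positivity
  have hsT : s * T = π := by simp only [T]; field_simp
  have hP : 2 * π / s = T + T := by ring
  rw [hP] at hf hfi ⊢
  have hgi : IntervalIntegrable (fun u => f u * Real.sin (s * u)) volume 0 (T + T) :=
    hfi.mul_continuousOn (by fun_prop)
  have hgi₁ := hgi.mono_set (uIcc_subset_uIcc_left (by simp [hT.le] : T ∈ uIcc 0 (T + T)))
  have hgi₂ := hgi.mono_set (uIcc_subset_uIcc_right (by simp [hT.le] : T ∈ uIcc 0 (T + T)))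
  have hgi₂' := hgi₂.comp_add_right T
  simp only [sub_self, add_sub_cancel_right] at hgi₂'
  have hsecond : ∫ u in T..T + T, f u * Real.sin (s * u)
      = ∫ u in (0)..T, f (u + T) * Real.sin (s * (u + T)) := by
    rw [intervalIntegral.integral_comp_add_right (fun u => f u * Real.sin (s * u)), zero_add]
  rw [← intervalIntegral.integral_add_adjacent_intervals hgi₁ hgi₂, hsecond,
    ← intervalIntegral.integral_add hgi₁ hgi₂']
  refine intervalIntegral.integral_zero.ge.trans <|
    intervalIntegral.integral_mono_on_of_le_Ioo hT.le intervalIntegrable_const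
      (hgi₁.add hgi₂') fun u hu => ?_
  have hsin : Real.sin (s * (u + T)) = -Real.sin (s * u) := by
    rw [mul_add, hsT, Real.sin_add_pi]
  have hfu : f (u + T) ≤ f u :=
    hf ⟨hu.1, by linarith [hu.2]⟩ ⟨by linarith [hu.1], by linarith [hu.2]⟩ (by linarith)
  have hsin_nonneg : 0 ≤ Real.sin (s * u) :=
    sin_nonneg_of_nonneg_of_le_pi (by nlinarith [hu.1]) (by nlinarith [hu.2])
  rw [hsin]
  nlinarith

theorem intervalIntegral_period_antitone_mul_sin_nonneg {f : ℝ → ℝ} {s : ℝ} (hs : 0 < s)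
    (hf : AntitoneOn f (Ioi 0)) (hfi : IntegrableOn f (Ioi 0)) (k : ℕ) :
    0 ≤ ∫ r in k * (2 * π / s)..(k + 1) * (2 * π / s), f r * Real.sin (s * r) := by
  set P := 2 * π / s
  set a := k * P
  have ha : 0 ≤ a := by positivity
  have hshift : ∫ u in (0)..P, f (a + u) * Real.sin (s * u)
      = ∫ r in a..(k + 1) * P, f r * Real.sin (s * r) := by
    have hperiod (u : ℝ) : Real.sin (s * (a + u)) = Real.sin (s * u) := by
      rw [show s * (a + u) = s * u + k * (2 * π) by simp only [a, P]; field_simp; ring,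
        Real.sin_add_nat_mul_two_pi]
    calc ∫ u in (0)..P, f (a + u) * Real.sin (s * u)
        = ∫ u in (0)..P, f (a + u) * Real.sin (s * (a + u)) := by simp only [hperiod]
      _ = ∫ r in a..(k + 1) * P, f r * Real.sin (s * r) := by
        rw [intervalIntegral.integral_comp_add_left (fun r => f r * Real.sin (s * r)), add_zero,
          show a + P = (k + 1) * P by ring]
  rw [← hshift]
  refine intervalIntegral_antitone_mul_sin_nonneg hs
    (fun u hu v hv huv => hf ?_ ?_ (by linarith)) ?_
  · exact add_pos_of_nonneg_of_pos ha hu.1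
  · exact add_pos_of_nonneg_of_pos ha hv.1
  · simpa using (hfi.intervalIntegrable_of_Ioi ha (by positivity : 0 ≤ a + P)).comp_add_left a

theorem integral_Ioi_antitone_mul_sin_nonneg {f : ℝ → ℝ} {s : ℝ} (hs : 0 < s)
    (hf : AntitoneOn f (Ioi 0)) (hfi : IntegrableOn f (Ioi 0)) :
    0 ≤ ∫ r in Ioi 0, f r * Real.sin (s * r) := by
  set P := 2 * π / s
  have hlim := intervalIntegral_tendsto_integral_Ioi 0 (hfi.mul_sin_mul s)
    (tendsto_natCast_atTop_atTop.atTop_mul_const (by positivity : 0 < P))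
  refine ge_of_tendsto hlim (Eventually.of_forall fun N => ?_)
  have hsum := intervalIntegral.sum_integral_adjacent_intervals (a := fun k : ℕ => k * P)
    (n := N) fun k _ => (hfi.mul_sin_mul s).intervalIntegrable_of_Ioi (by positivity)
      (by positivity)
  simp only [CharP.cast_eq_zero, zero_mul, Nat.cast_add, Nat.cast_one] at hsum
  rw [← hsum]
  exact Finset.sum_nonneg fun k _ => intervalIntegral_period_antitone_mul_sin_nonneg hs hf hfi k

theorem integral_Ioi_antitone_mul_sin_div_nonneg {f : ℝ → ℝ} {s : ℝ}
    (hf : AntitoneOn f (Ioi 0)) (hfi : IntegrableOn f (Ioi 0)) :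
    0 ≤ (∫ r in Ioi 0, f r * Real.sin (s * r)) / s := by
  rcases lt_trichotomy s 0 with hs | rfl | hs
  · have hodd : ∫ r in Ioi 0, f r * Real.sin (s * r)
        = -∫ r in Ioi 0, f r * Real.sin (-s * r) := by
      simp only [neg_mul, Real.sin_neg, mul_neg, integral_neg, neg_neg]
    rw [hodd, neg_div, ← div_neg]
    exact div_nonneg (integral_Ioi_antitone_mul_sin_nonneg (neg_pos.2 hs) hf hfi)
      (neg_nonneg.2 hs.le)
  · simp
  · exact div_nonneg (integral_Ioi_antitone_mul_sin_nonneg hs hf hfi) hs.le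

theorem im_integral_ofReal_mul_one_sub_exp {f : ℝ → ℝ} {ν : Measure ℝ} (hfi : Integrable f ν)
    (s : ℝ) :
    (∫ r, (f r : ℂ) * (1 - Complex.exp (-(Complex.I * s) * r)) ∂ν).im
      = ∫ r, f r * Real.sin (s * r) ∂ν := by
  have hint : Integrable (fun r => (f r : ℂ) * (1 - Complex.exp (-(Complex.I * s) * r))) ν :=
    hfi.ofReal.mul_bdd (by fun_prop) (c := 2) (ae_of_all _ fun r => ?_)
  · rw [← RCLike.im_to_complex, ← integral_im hint]
    congr 1 with r
    simp [Complex.exp_im, Complex.exp_re, Complex.mul_re, Complex.mul_im]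
  refine (norm_sub_le _ _).trans ?_
  rw [norm_one, show -(Complex.I * s) * r = ((-(s * r) : ℝ) : ℂ) * Complex.I by push_cast; ring,
    Complex.norm_exp_ofReal_mul_I]
  norm_num

theorem Complex.re_one_div_I_mul_ofReal_mul (s : ℝ) (z : ℂ) :
    (1 / (Complex.I * s) * z).re = z.im / s := by
  rw [one_div, mul_inv, Complex.inv_I, ← Complex.ofReal_inv]
  simp only [Complex.mul_re, Complex.mul_im, Complex.neg_re, Complex.neg_im, Complex.I_re,
    Complex.I_im, Complex.ofReal_re, Complex.ofReal_im]
  ring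

theorem stmt2_general (μ : ℝ → ℝ)
    (hmono : AntitoneOn μ (Ioi 0))
    (hint : IntegrableOn μ (Ioi 0))
    (s : ℝ) :
    1 ≤ (1 + (1 / (Complex.I * s)) *
      ∫ r in Ioi (0 : ℝ), (μ r : ℂ) * (1 - Complex.exp (-(Complex.I * s) * r))).re := by
  rw [Complex.add_re, Complex.one_re, Complex.re_one_div_I_mul_ofReal_mul,
    im_integral_ofReal_mul_one_sub_exp hint]
  linarith [integral_Ioi_antitone_mul_sin_div_nonneg (s := s) hmono hint]

/-- For `μ : (0,∞) → [0,∞)` integrable and non-increasing, and `s ≠ 0`, defining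
`ℓ(is) = 1 + (1/(is)) ∫_0^∞ μ(r)(1 - e^{-isr}) dr`, one has `Re ℓ(is) ≥ 1`. -/
theorem stmt2 (μ : ℝ → ℝ) (hpos : ∀ r ∈ Ioi (0 : ℝ), 0 ≤ μ r)
    (hmono : AntitoneOn μ (Ioi 0))
    (hint : IntegrableOn μ (Ioi 0))
    (s : ℝ) (hs : s ≠ 0) :
    1 ≤ (1 + (1 / (Complex.I * s)) *
      ∫ r in Ioi (0 : ℝ), (μ r : ℂ) * (1 - Complex.exp (-(Complex.I * s) * r))).re :=
  stmt2_general μ hmono hint s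
end

section
/- For a, b > 0, the complex number tanh(a + ib) = (sinh(2a) + i sin(2b)) / (cosh(2a) + cos(2b)) satisfies |arg tanh(a+ib)| < arctan(b/a). In particular, |arg tanh z| < arg z whenever z lies in the open first quadrant with Re z > 0 and Im z > 0. -/
open Complex ComplexConjugate

/-!
Writing `z = a + bi`, one has `tanh z = sinh z cosh z̄ / (cosh z cosh z̄)`, and the addition formulas
turn numerator and denominator into `(sinh 2a + i sin 2b) / 2` and `(cosh 2a + cos 2b) / 2`.
For `a > 0` the denominator is positive since `cosh 2a > 1`, so
`arg tanh z = arctan (sin 2b / sinh 2a)`, and `|sin 2b| < 2b`, `sinh 2a > 2a` give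
`|sin 2b| / sinh 2a < b / a`. The last claim follows as `arg z = arctan (b / a)`.
-/

theorem Real.abs_arctan (x : ℝ) : |Real.arctan x| = Real.arctan |x| := by
  rcases le_or_gt 0 x with hx | hx
  · rw [abs_of_nonneg hx, abs_of_nonneg (Real.arctan_nonneg.2 hx)]
  · rw [abs_of_neg hx, abs_of_neg (Real.arctan_lt_zero.2 hx), Real.arctan_neg]

theorem Real.cosh_add_cos_pos {x : ℝ} (hx : x ≠ 0) (y : ℝ) : 0 < Real.cosh x + Real.cos y := by
  linarith [Real.one_lt_cosh.2 hx, Real.neg_one_le_cos y]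

theorem Real.abs_sin_div_sinh_lt {x y : ℝ} (hx : 0 < x) (hy : 0 < y) :
    |Real.sin y| / Real.sinh x < y / x := by
  have hsin : |Real.sin y| < y := by simpa [abs_of_pos hy] using Real.abs_sin_lt_abs hy.ne'
  have hsinh : x < Real.sinh x := Real.self_lt_sinh_iff.2 hx
  rw [div_lt_div_iff₀ (hx.trans hsinh) hx]
  nlinarith [abs_nonneg (Real.sin y)]

namespace Complex

theorem arg_eq_arctan_of_re_pos {z : ℂ} (h : 0 < z.re) :
    arg z = Real.arctan (z.im / z.re) := by
  obtain ⟨hlo, hhi⟩ := abs_lt.1 (abs_arg_lt_pi_div_two_iff.2 (Or.inl h))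
  rw [← tan_arg, Real.arctan_tan hlo hhi]

theorem arg_div_ofReal (x : ℂ) {r : ℝ} (hr : 0 < r) : arg (x / r) = arg x := by
  rw [div_eq_mul_inv, ← ofReal_inv, arg_mul_real (inv_pos.2 hr)]

theorem tanh_add_mul_I (a b : ℝ) :
    tanh (a + b * I) =
      ((Real.sinh (2 * a) : ℂ) + (Real.sin (2 * b) : ℂ) * I) /
        ((Real.cosh (2 * a) : ℂ) + (Real.cos (2 * b) : ℂ)) := by
  set z : ℂ := a + b * I
  have hsum : z + conj z = ((2 * a : ℝ) : ℂ) := by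
    rw [add_conj, add_re, ofReal_re, mul_re, I_re, I_im, ofReal_re, ofReal_im]; push_cast; ring
  have hdiff : z - conj z = ((2 * b : ℝ) : ℂ) * I := by
    rw [sub_conj, add_im, ofReal_im, mul_im, I_re, I_im, ofReal_re, ofReal_im]; push_cast; ring
  have hnum : 2 * (sinh z * cosh (conj z)) = Real.sinh (2 * a) + Real.sin (2 * b) * I := by
    rw [ofReal_sinh, ofReal_sin, ← hsum, ← sinh_mul_I, ← hdiff, sinh_add z, sinh_sub z]; ring
  have hden : 2 * (cosh z * cosh (conj z)) = Real.cosh (2 * a) + Real.cos (2 * b) := by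
    rw [ofReal_cosh, ofReal_cos, ← hsum, ← cosh_mul_I, ← hdiff, cosh_add z, cosh_sub z]; ring
  rw [← hnum, ← hden, mul_div_mul_left _ _ two_ne_zero, tanh_eq_sinh_div_cosh]
  -- where `cosh z = 0`, both sides are the junk value `_ / 0 = 0`
  rcases eq_or_ne (cosh z) 0 with h | h
  · simp [h]
  · rw [mul_div_mul_right _ _ (by rwa [cosh_conj, map_ne_zero])]

theorem arg_tanh_add_mul_I {a : ℝ} (ha : 0 < a) (b : ℝ) :
    arg (tanh (a + b * I)) = Real.arctan (Real.sin (2 * b) / Real.sinh (2 * a)) := by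
  have hden := Real.cosh_add_cos_pos (by positivity : 2 * a ≠ 0) (2 * b)
  have hre : 0 < Real.sinh (2 * a) := Real.sinh_pos_iff.2 (by positivity)
  rw [tanh_add_mul_I, ← ofReal_add, arg_div_ofReal _ hden, arg_eq_arctan_of_re_pos] <;>
    simp only [add_re, add_im, mul_re, mul_im, ofReal_re, ofReal_im, I_re, I_im]
  · ring_nf
  · simpa using hre

theorem abs_arg_tanh_add_mul_I_lt {a b : ℝ} (ha : 0 < a) (hb : 0 < b) :
    |arg (tanh (a + b * I))| < Real.arctan (b / a) := by
  rw [arg_tanh_add_mul_I ha, Real.abs_arctan, abs_div,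
    abs_of_pos (Real.sinh_pos_iff.2 (by positivity))]
  apply Real.arctan_strictMono
  simpa [mul_div_mul_left] using
    Real.abs_sin_div_sinh_lt (by positivity : 0 < 2 * a) (by positivity : 0 < 2 * b)

end Complex

/-- For `a, b > 0`, `tanh(a+ib) = (sinh(2a) + i sin(2b))/(cosh(2a) + cos(2b))` with
positive denominator, and `|arg tanh(a+ib)| < arctan(b/a)`.  In particular
`|arg tanh z| < arg z` for `z` in the open first quadrant. -/
theorem stmt6 (a b : ℝ) (ha : 0 < a) (hb : 0 < b) :
    0 < Real.cosh (2 * a) + Real.cos (2 * b) ∧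
    Complex.tanh (a + b * Complex.I) =
      ((Real.sinh (2 * a) : ℂ) + (Real.sin (2 * b) : ℂ) * Complex.I) /
        ((Real.cosh (2 * a) : ℂ) + (Real.cos (2 * b) : ℂ)) ∧
    |Complex.arg (Complex.tanh (a + b * Complex.I))| < Real.arctan (b / a) ∧
    ∀ z : ℂ, 0 < z.re → 0 < z.im →
      |Complex.arg (Complex.tanh z)| < Complex.arg z := by
  refine ⟨Real.cosh_add_cos_pos (by positivity) _, tanh_add_mul_I a b,
    abs_arg_tanh_add_mul_I_lt ha hb, fun z hre him => ?_⟩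
  rw [arg_eq_arctan_of_re_pos hre, ← z.re_add_im]
  simpa using abs_arg_tanh_add_mul_I_lt hre him
end

section
/- Let μ : (0,∞) → [0,∞) be non-increasing and integrable, let H be a Hilbert space, and let M = L²_μ(0,∞; H) be the weighted Bochner space with norm ‖η‖² = ∫_0^∞ μ(s)‖η(s)‖²_H ds. For η̂ ∈ M define ξ̂(s) = ∫_0^s e^{-(s-σ)} η̂(σ) dσ. Then ξ̂ ∈ M and ‖ξ̂‖_M ≤ ‖η̂‖_M. -/
/-!
Weighting the Cauchy–Schwarz inequality by the kernel `e^{-(s-σ)}`, whose mass on `(0, s)` is at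
most `1`, gives `‖ξ̂(s)‖² ≤ ∫_0^s e^{-(s-σ)} ‖η̂(σ)‖² dσ`. Since `μ` is non-increasing,
`μ(s) ≤ μ(σ)` can be moved inside this integral, and Tonelli's theorem together with
`∫_σ^∞ e^{-(s-σ)} ds = 1` integrates the kernel out. The computation is done with lower Lebesgue
integrals, so that integrability of `μ ‖ξ̂‖²` comes out of the bound instead of being needed for it.
-/

open MeasureTheory Set
open scoped ENNReal

theorem ENNReal.lintegral_mul_sq_le_lintegral_mul_lintegral_mul_sq {α : Type*}
    [MeasurableSpace α] {ν : Measure α} {w f : α → ℝ≥0∞} (hw : AEMeasurable w ν)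
    (hf : AEMeasurable f ν) :
    (∫⁻ a, w a * f a ∂ν) ^ 2 ≤ (∫⁻ a, w a ∂ν) * ∫⁻ a, w a * f a ^ 2 ∂ν := by
  have hsqrt_sq : ∀ x : ℝ≥0∞, (x ^ (1 / 2 : ℝ)) ^ 2 = x := fun x => by
    rw [← ENNReal.rpow_natCast, ← ENNReal.rpow_mul]; norm_num
  have hsplit : ∀ a, w a ^ (1 / 2 : ℝ) * (w a * f a ^ 2) ^ (1 / 2 : ℝ) = w a * f a := fun a => by
    rw [ENNReal.mul_rpow_of_nonneg _ _ (by norm_num), ← mul_assoc,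
      ← ENNReal.rpow_add_of_nonneg _ _ (by norm_num) (by norm_num), ← ENNReal.rpow_natCast,
      ← ENNReal.rpow_mul]
    norm_num
  have holder := ENNReal.lintegral_mul_norm_pow_le hw (hw.mul (hf.pow_const 2))
    (p := 1 / 2) (q := 1 / 2) (by norm_num) (by norm_num) (by norm_num)
  simp only [Pi.mul_apply, hsplit] at holder
  calc (∫⁻ a, w a * f a ∂ν) ^ 2
      ≤ ((∫⁻ a, w a ∂ν) ^ (1 / 2 : ℝ) * (∫⁻ a, w a * f a ^ 2 ∂ν) ^ (1 / 2 : ℝ)) ^ 2 :=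
        pow_le_pow_left₀ zero_le holder 2
    _ = (∫⁻ a, w a ∂ν) * ∫⁻ a, w a * f a ^ 2 ∂ν := by rw [mul_pow, hsqrt_sq, hsqrt_sq]

theorem lintegral_Ioi_ofReal_exp_neg_sub (σ : ℝ) :
    ∫⁻ s in Ioi σ, ENNReal.ofReal (Real.exp (-(s - σ))) = 1 := by
  have hexp : (fun s => Real.exp (-(s - σ))) = fun s => Real.exp σ * Real.exp (-s) := by
    funext s; rw [← Real.exp_add]; ring_nf
  rw [← ofReal_integral_eq_lintegral_ofReal, hexp, integral_const_mul, integral_exp_neg_Ioi,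
    ← Real.exp_add, add_neg_cancel, Real.exp_zero, ENNReal.ofReal_one]
  · rw [hexp]; exact (integrableOn_exp_neg_Ioi σ).const_mul _
  · exact ae_of_all _ fun _ => (Real.exp_pos _).le

theorem lintegral_Iic_ofReal_exp_neg_sub (s : ℝ) :
    ∫⁻ σ in Iic s, ENNReal.ofReal (Real.exp (-(s - σ))) = 1 := by
  have hexp : (fun σ => Real.exp (-(s - σ))) = fun σ => Real.exp (-s) * Real.exp σ := by
    funext σ; rw [← Real.exp_add]; ring_nf
  rw [← ofReal_integral_eq_lintegral_ofReal, hexp, integral_const_mul, integral_exp_Iic,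
    ← Real.exp_add, neg_add_cancel, Real.exp_zero, ENNReal.ofReal_one]
  · rw [hexp]; exact (integrableOn_exp_Iic s).const_mul _
  · exact ae_of_all _ fun _ => (Real.exp_pos _).le

theorem lintegral_Ioi_lintegral_Ioo_comm {a : ℝ} {f : ℝ → ℝ → ℝ≥0∞}
    (hf : AEMeasurable (Function.uncurry f)
      ((volume.restrict (Ioi a)).prod (volume.restrict (Ioi a)))) :
    ∫⁻ s in Ioi a, ∫⁻ σ in Ioo a s, f s σ = ∫⁻ σ in Ioi a, ∫⁻ s in Ioi σ, f s σ := by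
  set ν := volume.restrict (Ioi a)
  have hinner : ∀ s, ∫⁻ σ in Ioo a s, f s σ = ∫⁻ σ, (Iio s).indicator (f s) σ ∂ν := fun s => by
    rw [lintegral_indicator measurableSet_Iio, Measure.restrict_restrict measurableSet_Iio,
      Iio_inter_Ioi]
  have hinner' : ∀ σ ∈ Ioi a,
      ∫⁻ s in Ioi σ, f s σ = ∫⁻ s, (Ioi σ).indicator (f · σ) s ∂ν := fun σ hσ => by
    rw [lintegral_indicator measurableSet_Ioi, Measure.restrict_restrict measurableSet_Ioi,
      inter_eq_left.2 (Ioi_subset_Ioi (le_of_lt hσ))]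
  have hF := hf.indicator (measurableSet_lt measurable_snd measurable_fst)
  calc ∫⁻ s in Ioi a, ∫⁻ σ in Ioo a s, f s σ
      = ∫⁻ s, ∫⁻ σ, {p : ℝ × ℝ | p.2 < p.1}.indicator (Function.uncurry f) (s, σ) ∂ν ∂ν := by
        simp_rw [hinner]; rfl
    _ = ∫⁻ σ, ∫⁻ s, {p : ℝ × ℝ | p.2 < p.1}.indicator (Function.uncurry f) (s, σ) ∂ν ∂ν :=
        lintegral_lintegral_swap hF
    _ = ∫⁻ σ in Ioi a, ∫⁻ s in Ioi σ, f s σ :=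
        (setLIntegral_congr_fun measurableSet_Ioi fun σ hσ => (hinner' σ hσ).symm)

section ExpKernel

variable {E : Type*} [NormedAddCommGroup E] [NormedSpace ℝ E]

theorem enorm_setIntegral_exp_neg_sub_smul_sq_le {η : ℝ → E} {s : ℝ} {t : Set ℝ}
    (ht : t ⊆ Iic s) (hη : AEStronglyMeasurable η (volume.restrict t)) :
    ‖∫ σ in t, Real.exp (-(s - σ)) • η σ‖ₑ ^ 2 ≤
      ∫⁻ σ in t, ENNReal.ofReal (Real.exp (-(s - σ))) * ‖η σ‖ₑ ^ 2 := by
  have hk : Measurable fun σ => ENNReal.ofReal (Real.exp (-(s - σ))) := by fun_prop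
  have hnorm : ‖∫ σ in t, Real.exp (-(s - σ)) • η σ‖ₑ ≤
      ∫⁻ σ in t, ENNReal.ofReal (Real.exp (-(s - σ))) * ‖η σ‖ₑ := by
    refine (enorm_integral_le_lintegral_enorm _).trans_eq (lintegral_congr fun σ => ?_)
    rw [enorm_smul, Real.enorm_eq_ofReal (Real.exp_pos _).le]
  have hmass : ∫⁻ σ in t, ENNReal.ofReal (Real.exp (-(s - σ))) ≤ 1 :=
    (lintegral_mono_set ht).trans_eq (lintegral_Iic_ofReal_exp_neg_sub s)
  calc ‖∫ σ in t, Real.exp (-(s - σ)) • η σ‖ₑ ^ 2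
      ≤ (∫⁻ σ in t, ENNReal.ofReal (Real.exp (-(s - σ))) * ‖η σ‖ₑ) ^ 2 :=
        pow_le_pow_left₀ zero_le hnorm 2
    _ ≤ (∫⁻ σ in t, ENNReal.ofReal (Real.exp (-(s - σ)))) *
          ∫⁻ σ in t, ENNReal.ofReal (Real.exp (-(s - σ))) * ‖η σ‖ₑ ^ 2 :=
        ENNReal.lintegral_mul_sq_le_lintegral_mul_lintegral_mul_sq hk.aemeasurable hη.enorm
    _ ≤ ∫⁻ σ in t, ENNReal.ofReal (Real.exp (-(s - σ))) * ‖η σ‖ₑ ^ 2 :=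
        mul_le_of_le_one_left zero_le hmass

theorem aestronglyMeasurable_setIntegral_Ioo_exp_neg_sub_smul {a : ℝ} {η : ℝ → E}
    (hη : AEStronglyMeasurable η (volume.restrict (Ioi a))) :
    AEStronglyMeasurable (fun s => ∫ σ in Ioo a s, Real.exp (-(s - σ)) • η σ)
      (volume.restrict (Ioi a)) := by
  set ν := volume.restrict (Ioi a)
  have hinner : ∀ s, ∫ σ in Ioo a s, Real.exp (-(s - σ)) • η σ =
      ∫ σ, (Iio s).indicator (fun σ => Real.exp (-(s - σ)) • η σ) σ ∂ν := fun s => by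
    rw [integral_indicator measurableSet_Iio, Measure.restrict_restrict measurableSet_Iio,
      Iio_inter_Ioi]
  simp_rw [hinner]
  have hF : AEStronglyMeasurable (fun p : ℝ × ℝ => Real.exp (-(p.1 - p.2)) • η p.2) (ν.prod ν) :=
    (by fun_prop : Continuous fun p : ℝ × ℝ => Real.exp (-(p.1 - p.2))).aestronglyMeasurable.smul
      hη.comp_snd
  exact (hF.indicator (measurableSet_lt measurable_snd measurable_fst)).integral_prod_right'

theorem lintegral_ofReal_mul_enorm_setIntegral_exp_neg_sub_smul_sq_le {a : ℝ} {μ : ℝ → ℝ}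
    (hμ : AntitoneOn μ (Ioi a)) {η : ℝ → E}
    (hη : AEStronglyMeasurable η (volume.restrict (Ioi a))) :
    ∫⁻ s in Ioi a, ENNReal.ofReal (μ s) * ‖∫ σ in Ioo a s, Real.exp (-(s - σ)) • η σ‖ₑ ^ 2 ≤
      ∫⁻ σ in Ioi a, ENNReal.ofReal (μ σ) * ‖η σ‖ₑ ^ 2 := by
  set k : ℝ → ℝ → ℝ≥0∞ := fun s σ => ENNReal.ofReal (Real.exp (-(s - σ)))
  set g : ℝ → ℝ≥0∞ := fun σ => ENNReal.ofReal (μ σ) * ‖η σ‖ₑ ^ 2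
  have hg : AEMeasurable g (volume.restrict (Ioi a)) :=
    (aemeasurable_restrict_of_antitoneOn measurableSet_Ioi hμ).ennreal_ofReal.mul
      (hη.enorm.pow_const 2)
  have hpointwise : ∀ s ∈ Ioi a, ENNReal.ofReal (μ s) *
      ‖∫ σ in Ioo a s, Real.exp (-(s - σ)) • η σ‖ₑ ^ 2 ≤ ∫⁻ σ in Ioo a s, k s σ * g σ := by
    intro s hs
    calc ENNReal.ofReal (μ s) * ‖∫ σ in Ioo a s, Real.exp (-(s - σ)) • η σ‖ₑ ^ 2
        ≤ ENNReal.ofReal (μ s) * ∫⁻ σ in Ioo a s, k s σ * ‖η σ‖ₑ ^ 2 :=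
          mul_le_mul_right (enorm_setIntegral_exp_neg_sub_smul_sq_le
            (Ioo_subset_Iio_self.trans Iio_subset_Iic_self) (hη.mono_set Ioo_subset_Ioi_self)) _
      _ = ∫⁻ σ in Ioo a s, ENNReal.ofReal (μ s) * (k s σ * ‖η σ‖ₑ ^ 2) :=
          (lintegral_const_mul' _ _ ENNReal.ofReal_ne_top).symm
      _ ≤ ∫⁻ σ in Ioo a s, k s σ * g σ := by
          refine setLIntegral_mono' measurableSet_Ioo fun σ hσ => ?_
          change ENNReal.ofReal (μ s) * (k s σ * ‖η σ‖ₑ ^ 2) ≤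
            k s σ * (ENNReal.ofReal (μ σ) * ‖η σ‖ₑ ^ 2)
          rw [mul_left_comm]
          gcongr
          exact hμ hσ.1 hs hσ.2.le
  have hkg : AEMeasurable (Function.uncurry fun s σ => k s σ * g σ)
      ((volume.restrict (Ioi a)).prod (volume.restrict (Ioi a))) :=
    (by fun_prop : Measurable (Function.uncurry k)).aemeasurable.mul
      (hg.comp_quasiMeasurePreserving Measure.quasiMeasurePreserving_snd)
  calc _ ≤ ∫⁻ s in Ioi a, ∫⁻ σ in Ioo a s, k s σ * g σ :=
        setLIntegral_mono' measurableSet_Ioi hpointwise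
    _ = ∫⁻ σ in Ioi a, ∫⁻ s in Ioi σ, k s σ * g σ := lintegral_Ioi_lintegral_Ioo_comm hkg
    _ = ∫⁻ σ in Ioi a, g σ := by
        refine lintegral_congr fun σ => ?_
        rw [lintegral_mul_const _ (by fun_prop), lintegral_Ioi_ofReal_exp_neg_sub, one_mul]

end ExpKernel

theorem ENNReal.ofReal_mul_norm_sq {E : Type*} [SeminormedAddCommGroup E] {c : ℝ} (hc : 0 ≤ c)
    (x : E) : ENNReal.ofReal (c * ‖x‖ ^ 2) = ENNReal.ofReal c * ‖x‖ₑ ^ 2 := by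
  rw [ENNReal.ofReal_mul hc, ENNReal.ofReal_pow (norm_nonneg x), ofReal_norm]

theorem integrable_and_integral_le_of_lintegral_ofReal_le {α : Type*} [MeasurableSpace α]
    {ν : Measure α} {f g : α → ℝ} (hf : AEStronglyMeasurable f ν) (hf₀ : 0 ≤ᵐ[ν] f)
    (hg : Integrable g ν) (hg₀ : 0 ≤ᵐ[ν] g)
    (hfg : ∫⁻ a, ENNReal.ofReal (f a) ∂ν ≤ ∫⁻ a, ENNReal.ofReal (g a) ∂ν) :
    Integrable f ν ∧ ∫ a, f a ∂ν ≤ ∫ a, g a ∂ν := by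
  have hg_fin : ∫⁻ a, ENNReal.ofReal (g a) ∂ν ≠ ∞ :=
    ((hasFiniteIntegral_iff_ofReal hg₀).1 hg.2).ne
  refine ⟨⟨hf, (hasFiniteIntegral_iff_ofReal hf₀).2 (hfg.trans_lt hg_fin.lt_top)⟩, ?_⟩
  rw [integral_eq_lintegral_of_nonneg_ae hf₀ hf,
    integral_eq_lintegral_of_nonneg_ae hg₀ hg.aestronglyMeasurable]
  exact ENNReal.toReal_mono hg_fin hfg

theorem stmt9_general {H : Type*} [NormedAddCommGroup H] [InnerProductSpace ℂ H]
    (μ : ℝ → ℝ) (hpos : ∀ s ∈ Ioi (0 : ℝ), 0 ≤ μ s)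
    (hmono : AntitoneOn μ (Ioi 0))
    (η : ℝ → H)
    (hmeas : AEStronglyMeasurable η (volume.restrict (Ioi 0)))
    (hη : IntegrableOn (fun s => μ s * ‖η s‖ ^ 2) (Ioi 0)) :
    IntegrableOn
        (fun s => μ s * ‖∫ σ in (0 : ℝ)..s, Real.exp (-(s - σ)) • η σ‖ ^ 2) (Ioi 0) ∧
      (∫ s in Ioi (0 : ℝ), μ s * ‖∫ σ in (0 : ℝ)..s, Real.exp (-(s - σ)) • η σ‖ ^ 2) ≤
        ∫ s in Ioi (0 : ℝ), μ s * ‖η s‖ ^ 2 := by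
  have hIoo : EqOn (fun s => μ s * ‖∫ σ in (0 : ℝ)..s, Real.exp (-(s - σ)) • η σ‖ ^ 2)
      (fun s => μ s * ‖∫ σ in Ioo 0 s, Real.exp (-(s - σ)) • η σ‖ ^ 2) (Ioi 0) := fun s hs => by
    dsimp only
    rw [intervalIntegral.integral_of_le (le_of_lt hs), integral_Ioc_eq_integral_Ioo]
  rw [integrableOn_congr_fun hIoo measurableSet_Ioi, setIntegral_congr_fun measurableSet_Ioi hIoo]
  have hnonneg : ∀ x : ℝ → H, 0 ≤ᵐ[volume.restrict (Ioi 0)] fun s => μ s * ‖x s‖ ^ 2 :=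
    fun x => (ae_restrict_iff' measurableSet_Ioi).2 <| ae_of_all _ fun s hs =>
      mul_nonneg (hpos s hs) (sq_nonneg _)
  refine integrable_and_integral_le_of_lintegral_ofReal_le ?_ (hnonneg _) hη (hnonneg η) ?_
  · exact (aemeasurable_restrict_of_antitoneOn measurableSet_Ioi hmono).aestronglyMeasurable.mul
      ((aestronglyMeasurable_setIntegral_Ioo_exp_neg_sub_smul hmeas).norm.pow 2)
  · have hofReal : ∀ x : ℝ → H, EqOn (fun s => ENNReal.ofReal (μ s * ‖x s‖ ^ 2))
        (fun s => ENNReal.ofReal (μ s) * ‖x s‖ₑ ^ 2) (Ioi 0) :=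
      fun x s hs => ENNReal.ofReal_mul_norm_sq (hpos s hs) (x s)
    rw [setLIntegral_congr_fun measurableSet_Ioi (hofReal _),
      setLIntegral_congr_fun measurableSet_Ioi (hofReal η)]
    exact lintegral_ofReal_mul_enorm_setIntegral_exp_neg_sub_smul_sq_le hmono hmeas

/-- Let `μ : (0,∞) → [0,∞)` be non-increasing and integrable, `H` a complex Hilbert
space, and `M = L²_μ(0,∞; H)`.  For `η̂ ∈ M`, the function
`ξ̂(s) = ∫_0^s e^{-(s-σ)} η̂(σ) dσ` belongs to `M` and `‖ξ̂‖_M ≤ ‖η̂‖_M`. -/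
theorem stmt9 {H : Type*} [NormedAddCommGroup H] [InnerProductSpace ℂ H] [CompleteSpace H]
    (μ : ℝ → ℝ) (hpos : ∀ s ∈ Ioi (0 : ℝ), 0 ≤ μ s)
    (hmono : AntitoneOn μ (Ioi 0))
    (hint : IntegrableOn μ (Ioi 0))
    (η : ℝ → H)
    (hmeas : AEStronglyMeasurable η (volume.restrict (Ioi 0)))
    (hη : IntegrableOn (fun s => μ s * ‖η s‖ ^ 2) (Ioi 0)) :
    IntegrableOn
        (fun s => μ s * ‖∫ σ in (0 : ℝ)..s, Real.exp (-(s - σ)) • η σ‖ ^ 2) (Ioi 0) ∧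
      (∫ s in Ioi (0 : ℝ), μ s * ‖∫ σ in (0 : ℝ)..s, Real.exp (-(s - σ)) • η σ‖ ^ 2) ≤
        ∫ s in Ioi (0 : ℝ), μ s * ‖η s‖ ^ 2 :=
  stmt9_general μ hpos hmono η hmeas hη
end

section
/- Let μ : (0,∞) → [0,∞) be non-increasing and integrable satisfying μ(t+s) ≤ C e^{-δt} μ(s) for all t ≥ 0, s > 0 (with C ≥ 1, δ > 0). Let λ ∈ ℂ with −δ/2 < Re λ. For η̂ ∈ M = L²_μ(0,∞; H), define ξ̂(s) = ∫_0^s e^{-λ(s-σ)} η̂(σ) dσ. Then ξ̂ ∈ M and ‖ξ̂‖_M ≤ (2√C)/(δ + 2 Re λ) ‖η̂‖_M. -/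
/-!
With `κ = δ/2 + Re λ`, the decay hypothesis gives `√μ(s) e^{-Re λ (s-σ)} ≤ √C e^{-κ(s-σ)} √μ(σ)`
for `0 < σ ≤ s`, so `√μ ‖ξ̂‖` is dominated by `√C` times the convolution of `g = √μ ‖η̂‖`
(extended by zero) with the kernel `k(u) = e^{-κu} 1_{u ≥ 0}`, whose integral is `1/κ`.
Young's inequality `‖k * g‖₂ ≤ ‖k‖₁ ‖g‖₂`, proved by Cauchy–Schwarz against the kernel followed
by Tonelli, then gives `‖ξ̂‖_M ≤ (√C / κ) ‖η̂‖_M`.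
-/

open MeasureTheory Set
open scoped ENNReal

theorem ENNReal.lintegral_mul_sq_le {α : Type*} [MeasurableSpace α] {ν : Measure α}
    {w g : α → ℝ≥0∞} (hw : AEMeasurable w ν) (hg : AEMeasurable g ν) :
    (∫⁻ a, w a * g a ∂ν) ^ 2 ≤ (∫⁻ a, w a ∂ν) * ∫⁻ a, w a * g a ^ 2 ∂ν := by
  have hsplit : ∀ a, w a * g a = w a ^ ((2 : ℕ) : ℝ)⁻¹ * (w a * g a ^ 2) ^ ((2 : ℕ) : ℝ)⁻¹ := by
    intro a
    rw [← ENNReal.mul_rpow_of_nonneg _ _ (by positivity), ← mul_assoc, ← sq, ← mul_pow,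
      ENNReal.pow_rpow_inv_natCast two_ne_zero]
  calc (∫⁻ a, w a * g a ∂ν) ^ 2
      ≤ ((∫⁻ a, w a ∂ν) ^ ((2 : ℕ) : ℝ)⁻¹ * (∫⁻ a, w a * g a ^ 2 ∂ν) ^ ((2 : ℕ) : ℝ)⁻¹) ^ 2 := by
        rw [lintegral_congr hsplit]
        gcongr
        exact ENNReal.lintegral_mul_norm_pow_le hw (hw.mul (hg.pow_const 2))
          (by positivity) (by positivity) (by norm_num)
    _ = (∫⁻ a, w a ∂ν) * ∫⁻ a, w a * g a ^ 2 ∂ν := by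
        rw [mul_pow, ENNReal.rpow_inv_natCast_pow two_ne_zero,
          ENNReal.rpow_inv_natCast_pow two_ne_zero]

section Convolution

variable {G : Type*} [AddGroup G] [MeasurableSpace G] [MeasurableAdd₂ G] [MeasurableNeg G]
  {ν : Measure G} [SFinite ν] [ν.IsAddLeftInvariant] [ν.IsAddRightInvariant] [ν.IsNegInvariant]

theorem lintegral_conv_sq_le {K g : G → ℝ≥0∞} (hK : Measurable K) (hg : AEMeasurable g ν) :
    ∫⁻ s, (∫⁻ σ, K (s - σ) * g σ ∂ν) ^ 2 ∂ν ≤ (∫⁻ u, K u ∂ν) ^ 2 * ∫⁻ σ, g σ ^ 2 ∂ν := by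
  have hmeas : AEMeasurable (fun p : G × G => K (p.1 - p.2) * g p.2 ^ 2) (ν.prod ν) :=
    (hK.comp measurable_sub).aemeasurable.mul
      ((hg.pow_const 2).comp_quasiMeasurePreserving Measure.quasiMeasurePreserving_snd)
  calc ∫⁻ s, (∫⁻ σ, K (s - σ) * g σ ∂ν) ^ 2 ∂ν
      ≤ ∫⁻ s, (∫⁻ u, K u ∂ν) * ∫⁻ σ, K (s - σ) * g σ ^ 2 ∂ν ∂ν := by
        refine lintegral_mono fun s => ?_
        rw [← lintegral_sub_left_eq_self K s]
        exact ENNReal.lintegral_mul_sq_le (hK.comp (measurable_const_sub s)).aemeasurable hg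
    _ = (∫⁻ u, K u ∂ν) * ∫⁻ σ, ∫⁻ s, K (s - σ) * g σ ^ 2 ∂ν ∂ν := by
        rw [lintegral_const_mul'' _ hmeas.lintegral_prod_right', lintegral_lintegral_swap hmeas]
    _ = (∫⁻ u, K u ∂ν) ^ 2 * ∫⁻ σ, g σ ^ 2 ∂ν := by
        have hinner : ∀ σ, ∫⁻ s, K (s - σ) * g σ ^ 2 ∂ν = (∫⁻ u, K u ∂ν) * g σ ^ 2 := fun σ => by
          rw [lintegral_mul_const (f := fun s => K (s - σ)) _ (hK.comp (measurable_sub_const σ)),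
            lintegral_sub_right_eq_self K]
        rw [lintegral_congr hinner, lintegral_const_mul'' _ (hg.pow_const 2), sq, mul_assoc]

end Convolution

noncomputable def expKernel (κ : ℝ) : ℝ → ℝ≥0∞ :=
  (Ici 0).indicator fun u => ENNReal.ofReal (Real.exp (-κ * u))

theorem measurable_expKernel (κ : ℝ) : Measurable (expKernel κ) :=
  (Measurable.ennreal_ofReal (by fun_prop)).indicator measurableSet_Ici

theorem lintegral_expKernel {κ : ℝ} (hκ : 0 < κ) :
    ∫⁻ u, expKernel κ u = ENNReal.ofReal κ⁻¹ := by
  rw [expKernel, lintegral_indicator measurableSet_Ici,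
    Measure.restrict_congr_set Ioi_ae_eq_Ici.symm,
    ← ofReal_integral_eq_lintegral_ofReal (exp_neg_integrableOn_Ioi 0 hκ)
      (ae_of_all _ fun _ => (Real.exp_pos _).le),
    integral_exp_mul_Ioi (neg_neg_iff_pos.2 hκ)]
  simp

theorem sqrt_le_of_decay {μ : ℝ → ℝ} {C δ : ℝ} (hC : 0 ≤ C)
    (hdecay : ∀ t ≥ (0 : ℝ), ∀ s > (0 : ℝ), μ (t + s) ≤ C * Real.exp (-δ * t) * μ s)
    {t σ : ℝ} (ht : 0 ≤ t) (hσ : 0 < σ) :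
    √(μ (t + σ)) ≤ √C * Real.exp (-(δ / 2) * t) * √(μ σ) := by
  calc √(μ (t + σ)) ≤ √(C * Real.exp (-δ * t) * μ σ) := Real.sqrt_le_sqrt (hdecay t ht σ hσ)
    _ = √C * Real.exp (-(δ / 2) * t) * √(μ σ) := by
      rw [Real.sqrt_mul (by positivity), Real.sqrt_mul hC, ← Real.exp_half]
      ring_nf

theorem integrable_and_integral_le_of_lintegral_le {α : Type*} [MeasurableSpace α]
    {ν : Measure α} {f : α → ℝ} {B : ℝ} (hf : AEStronglyMeasurable f ν) (hf0 : 0 ≤ᵐ[ν] f)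
    (hB : 0 ≤ B) (h : ∫⁻ a, ENNReal.ofReal (f a) ∂ν ≤ ENNReal.ofReal B) :
    Integrable f ν ∧ ∫ a, f a ∂ν ≤ B := by
  refine ⟨⟨hf, (hasFiniteIntegral_iff_ofReal hf0).2 (h.trans_lt ENNReal.ofReal_lt_top)⟩, ?_⟩
  rw [integral_eq_lintegral_of_nonneg_ae hf0 hf]
  exact ENNReal.toReal_le_of_le_ofReal hB h

theorem aestronglyMeasurable_intervalIntegral_zero {E : Type*} [NormedAddCommGroup E]
    [NormedSpace ℝ E] {F : ℝ → ℝ → E}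
    (hF : AEStronglyMeasurable (Function.uncurry F)
      ((volume.restrict (Ioi 0)).prod (volume.restrict (Ioi 0)))) :
    AEStronglyMeasurable (fun s => ∫ σ in (0 : ℝ)..s, F s σ) (volume.restrict (Ioi 0)) := by
  have hG := (hF.indicator (measurableSet_le measurable_snd measurable_fst)).integral_prod_right'
  refine hG.congr ((ae_restrict_iff' measurableSet_Ioi).2 (ae_of_all _ fun s hs => ?_))
  have hslice : (fun σ => {p : ℝ × ℝ | p.2 ≤ p.1}.indicator (Function.uncurry F) (s, σ))
      = (Iic s).indicator (F s) := by
    ext σ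
    simp [indicator]
  change ∫ σ in Ioi 0, _ = ∫ σ in (0 : ℝ)..s, F s σ
  rw [hslice, integral_indicator measurableSet_Iic, Measure.restrict_restrict measurableSet_Iic,
    inter_comm, Ioi_inter_Iic, intervalIntegral.integral_of_le (le_of_lt hs)]

section WeightedSpace

variable {H : Type*} [NormedAddCommGroup H]

noncomputable def weightedENorm (μ : ℝ → ℝ) (η : ℝ → H) : ℝ → ℝ≥0∞ :=
  (Ioi 0).indicator fun σ => ENNReal.ofReal (√(μ σ) * ‖η σ‖)

theorem aemeasurable_weightedENorm {μ : ℝ → ℝ} {η : ℝ → H}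
    (hμ : AEStronglyMeasurable μ (volume.restrict (Ioi 0)))
    (hη : AEStronglyMeasurable η (volume.restrict (Ioi 0))) :
    AEMeasurable (weightedENorm μ η) :=
  (aemeasurable_indicator_iff measurableSet_Ioi).2
    ((Real.continuous_sqrt.comp_aestronglyMeasurable hμ).mul hη.norm).aemeasurable.ennreal_ofReal

theorem lintegral_weightedENorm_sq {μ : ℝ → ℝ} {η : ℝ → H} (hμ : ∀ s ∈ Ioi (0 : ℝ), 0 ≤ μ s)
    (hη : IntegrableOn (fun s => μ s * ‖η s‖ ^ 2) (Ioi 0)) :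
    ∫⁻ σ, weightedENorm μ η σ ^ 2 = ENNReal.ofReal (∫ s in Ioi 0, μ s * ‖η s‖ ^ 2) := by
  rw [ofReal_integral_eq_lintegral_ofReal hη ((ae_restrict_iff' measurableSet_Ioi).2
    (ae_of_all _ fun s hs => by have := hμ s hs; positivity))]
  have hsq : ∀ σ, weightedENorm μ η σ ^ 2
      = (Ioi 0).indicator (fun σ => ENNReal.ofReal (μ σ * ‖η σ‖ ^ 2)) σ := by
    intro σ
    by_cases hσ : σ ∈ Ioi 0
    · rw [weightedENorm, indicator_of_mem hσ, indicator_of_mem hσ,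
        ← ENNReal.ofReal_pow (by positivity), mul_pow, Real.sq_sqrt (hμ σ hσ)]
    · simp [weightedENorm, indicator_of_notMem hσ]
  rw [lintegral_congr hsq, lintegral_indicator measurableSet_Ioi]

variable [NormedSpace ℂ H]

noncomputable def dampedPrimitive (lam : ℂ) (η : ℝ → H) (s : ℝ) : H :=
  ∫ σ in (0 : ℝ)..s, Complex.exp (-lam * (s - σ)) • η σ

theorem aestronglyMeasurable_dampedPrimitive {η : ℝ → H}
    (hη : AEStronglyMeasurable η (volume.restrict (Ioi 0))) (lam : ℂ) :
    AEStronglyMeasurable (dampedPrimitive lam η) (volume.restrict (Ioi 0)) :=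
  aestronglyMeasurable_intervalIntegral_zero <|
    (Continuous.aestronglyMeasurable (by fun_prop)).smul
      (hη.comp_quasiMeasurePreserving Measure.quasiMeasurePreserving_snd)

section Decay

variable {μ : ℝ → ℝ} {C δ : ℝ} (hC : 0 ≤ C)
  (hdecay : ∀ t ≥ (0 : ℝ), ∀ s > (0 : ℝ), μ (t + s) ≤ C * Real.exp (-δ * t) * μ s)
include hC hdecay

theorem ofReal_sqrt_mul_enorm_smul_le (lam : ℂ) (η : ℝ → H) {s σ : ℝ} (hσ : σ ∈ Ioc 0 s) :
    ENNReal.ofReal √(μ s) * ‖Complex.exp (-lam * (s - σ)) • η σ‖ₑ ≤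
      ENNReal.ofReal √C * (expKernel (δ / 2 + lam.re) (s - σ) * weightedENorm μ η σ) := by
  have ht : 0 ≤ s - σ := sub_nonneg.2 hσ.2
  have hnorm : ‖Complex.exp (-lam * (s - σ)) • η σ‖ = Real.exp (-lam.re * (s - σ)) * ‖η σ‖ := by
    simp [norm_smul, Complex.norm_exp, Complex.mul_re]
  have hdec := sqrt_le_of_decay hC hdecay ht hσ.1
  rw [sub_add_cancel] at hdec
  rw [expKernel, weightedENorm, indicator_of_mem (mem_Ici.2 ht), indicator_of_mem (mem_Ioi.2 hσ.1),
    ← ofReal_norm, hnorm, ← ENNReal.ofReal_mul (Real.exp_pos _).le,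
    ← ENNReal.ofReal_mul (Real.sqrt_nonneg _), ← ENNReal.ofReal_mul (Real.sqrt_nonneg _)]
  refine ENNReal.ofReal_le_ofReal ?_
  calc √(μ s) * (Real.exp (-lam.re * (s - σ)) * ‖η σ‖)
      ≤ √C * Real.exp (-(δ / 2) * (s - σ)) * √(μ σ) * (Real.exp (-lam.re * (s - σ)) * ‖η σ‖) := by
        gcongr
    _ = √C * (Real.exp (-(δ / 2 + lam.re) * (s - σ)) * (√(μ σ) * ‖η σ‖)) := by
        rw [show -(δ / 2 + lam.re) * (s - σ) = -(δ / 2) * (s - σ) + -lam.re * (s - σ) by ring,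
          Real.exp_add]
        ring

theorem ofReal_mul_sq_dampedPrimitive_le (hμ : ∀ s ∈ Ioi (0 : ℝ), 0 ≤ μ s) (lam : ℂ)
    (η : ℝ → H) {s : ℝ} (hs : 0 < s) :
    ENNReal.ofReal (μ s * ‖dampedPrimitive lam η s‖ ^ 2) ≤
      ENNReal.ofReal C *
        (∫⁻ σ, expKernel (δ / 2 + lam.re) (s - σ) * weightedENorm μ η σ) ^ 2 := by
  have hbound : ENNReal.ofReal √(μ s) * ‖dampedPrimitive lam η s‖ₑ ≤
      ENNReal.ofReal √C * ∫⁻ σ, expKernel (δ / 2 + lam.re) (s - σ) * weightedENorm μ η σ := by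
    rw [dampedPrimitive, intervalIntegral.integral_of_le hs.le]
    calc ENNReal.ofReal √(μ s) * ‖∫ σ in Ioc 0 s, Complex.exp (-lam * (s - σ)) • η σ‖ₑ
        ≤ ∫⁻ σ in Ioc 0 s, ENNReal.ofReal √(μ s) * ‖Complex.exp (-lam * (s - σ)) • η σ‖ₑ := by
          rw [lintegral_const_mul' _ _ ENNReal.ofReal_ne_top]
          gcongr
          exact enorm_integral_le_lintegral_enorm _
      _ ≤ ∫⁻ σ in Ioc 0 s,
            ENNReal.ofReal √C * (expKernel (δ / 2 + lam.re) (s - σ) * weightedENorm μ η σ) :=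
          setLIntegral_mono' measurableSet_Ioc fun σ hσ =>
            ofReal_sqrt_mul_enorm_smul_le hC hdecay lam η hσ
      _ ≤ _ := by
          rw [lintegral_const_mul' _ _ ENNReal.ofReal_ne_top]
          gcongr
          exact Measure.restrict_le_self
  calc ENNReal.ofReal (μ s * ‖dampedPrimitive lam η s‖ ^ 2)
      = (ENNReal.ofReal √(μ s) * ‖dampedPrimitive lam η s‖ₑ) ^ 2 := by
        rw [← ofReal_norm, ← ENNReal.ofReal_mul (Real.sqrt_nonneg _),
          ← ENNReal.ofReal_pow (by positivity), mul_pow, Real.sq_sqrt (hμ s hs)]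
    _ ≤ _ := pow_le_pow_left' hbound 2
    _ = _ := by rw [mul_pow, ← ENNReal.ofReal_pow (Real.sqrt_nonneg _), Real.sq_sqrt hC]

theorem lintegral_ofReal_mul_sq_dampedPrimitive_le (hμ : ∀ s ∈ Ioi (0 : ℝ), 0 ≤ μ s)
    (hμm : AEStronglyMeasurable μ (volume.restrict (Ioi 0))) {lam : ℂ}
    (hlam : 0 < δ / 2 + lam.re) {η : ℝ → H} (hηm : AEStronglyMeasurable η (volume.restrict (Ioi 0)))
    (hη : IntegrableOn (fun s => μ s * ‖η s‖ ^ 2) (Ioi 0)) :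
    ∫⁻ s in Ioi 0, ENNReal.ofReal (μ s * ‖dampedPrimitive lam η s‖ ^ 2) ≤
      ENNReal.ofReal (C / (δ / 2 + lam.re) ^ 2 * ∫ s in Ioi 0, μ s * ‖η s‖ ^ 2) :=
  calc ∫⁻ s in Ioi 0, ENNReal.ofReal (μ s * ‖dampedPrimitive lam η s‖ ^ 2)
      ≤ ENNReal.ofReal C *
          ∫⁻ s, (∫⁻ σ, expKernel (δ / 2 + lam.re) (s - σ) * weightedENorm μ η σ) ^ 2 := by
        rw [← lintegral_const_mul' _ _ ENNReal.ofReal_ne_top]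
        exact (setLIntegral_mono' measurableSet_Ioi fun s hs =>
          ofReal_mul_sq_dampedPrimitive_le hC hdecay hμ lam η hs).trans
          (setLIntegral_le_lintegral _ _)
    _ ≤ ENNReal.ofReal C * (ENNReal.ofReal (δ / 2 + lam.re)⁻¹ ^ 2 *
          ENNReal.ofReal (∫ s in Ioi 0, μ s * ‖η s‖ ^ 2)) := by
        rw [← lintegral_expKernel hlam, ← lintegral_weightedENorm_sq hμ hη]
        gcongr
        exact lintegral_conv_sq_le (measurable_expKernel _) (aemeasurable_weightedENorm hμm hηm)
    _ = _ := by
        rw [← ENNReal.ofReal_pow (inv_nonneg.2 hlam.le), ← ENNReal.ofReal_mul (by positivity),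
          ← ENNReal.ofReal_mul hC, div_eq_mul_inv C, inv_pow, mul_assoc]

end Decay

end WeightedSpace

theorem stmt10_general {H : Type*} [NormedAddCommGroup H] [InnerProductSpace ℂ H]
    (μ : ℝ → ℝ) (hpos : ∀ s ∈ Ioi (0 : ℝ), 0 ≤ μ s)
    (hint : IntegrableOn μ (Ioi 0))
    (C δ : ℝ) (hC : 1 ≤ C)
    (hdecay : ∀ t ≥ (0 : ℝ), ∀ s > (0 : ℝ), μ (t + s) ≤ C * Real.exp (-δ * t) * μ s)
    (lam : ℂ) (hlam : -(δ / 2) < lam.re)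
    (η : ℝ → H)
    (hmeas : AEStronglyMeasurable η (volume.restrict (Ioi 0)))
    (hη : IntegrableOn (fun s => μ s * ‖η s‖ ^ 2) (Ioi 0)) :
    IntegrableOn
        (fun s => μ s * ‖∫ σ in (0 : ℝ)..s, Complex.exp (-lam * (s - σ)) • η σ‖ ^ 2)
        (Ioi 0) ∧
      Real.sqrt (∫ s in Ioi (0 : ℝ),
          μ s * ‖∫ σ in (0 : ℝ)..s, Complex.exp (-lam * (s - σ)) • η σ‖ ^ 2) ≤
        (2 * Real.sqrt C / (δ + 2 * lam.re)) *
          Real.sqrt (∫ s in Ioi (0 : ℝ), μ s * ‖η s‖ ^ 2) := by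
  set κ := δ / 2 + lam.re with hκ_def
  set A := ∫ s in Ioi (0 : ℝ), μ s * ‖η s‖ ^ 2
  have hκ : 0 < κ := by rw [hκ_def]; linarith
  have hC0 : 0 ≤ C := zero_le_one.trans hC
  have hA : 0 ≤ A := setIntegral_nonneg measurableSet_Ioi fun s hs => by
    have := hpos s hs; positivity
  obtain ⟨hintegrable, hle⟩ := integrable_and_integral_le_of_lintegral_le
    (f := fun s => μ s * ‖dampedPrimitive lam η s‖ ^ 2)
    (hint.aestronglyMeasurable.mul ((aestronglyMeasurable_dampedPrimitive hmeas lam).norm.pow 2))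
    ((ae_restrict_iff' measurableSet_Ioi).2 (ae_of_all _ fun s hs => by
      have := hpos s hs; positivity))
    (mul_nonneg (div_nonneg hC0 (sq_nonneg κ)) hA)
    (lintegral_ofReal_mul_sq_dampedPrimitive_le hC0 hdecay hpos hint.aestronglyMeasurable hκ
      hmeas hη)
  refine ⟨hintegrable, ?_⟩
  calc √(∫ s in Ioi 0, μ s * ‖dampedPrimitive lam η s‖ ^ 2) ≤ √(C / κ ^ 2 * A) :=
        Real.sqrt_le_sqrt hle
    _ = 2 * √C / (δ + 2 * lam.re) * √A := by
      rw [Real.sqrt_mul (div_nonneg hC0 (sq_nonneg κ)), Real.sqrt_div' _ (sq_nonneg κ),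
        Real.sqrt_sq hκ.le, show δ + 2 * lam.re = 2 * κ by rw [hκ_def]; linarith,
        mul_div_mul_left _ _ two_ne_zero]

/-- Let `μ : (0,∞) → [0,∞)` be non-increasing and integrable with
`μ(t+s) ≤ C e^{-δt} μ(s)` (`C ≥ 1`, `δ > 0`), and let `λ ∈ ℂ` with `-δ/2 < Re λ`.
For `η̂ ∈ M = L²_μ(0,∞;H)`, the function `ξ̂(s) = ∫_0^s e^{-λ(s-σ)} η̂(σ) dσ` belongs
to `M` and `‖ξ̂‖_M ≤ (2√C)/(δ + 2 Re λ) ‖η̂‖_M`. -/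
theorem stmt10 {H : Type*} [NormedAddCommGroup H] [InnerProductSpace ℂ H] [CompleteSpace H]
    (μ : ℝ → ℝ) (hpos : ∀ s ∈ Ioi (0 : ℝ), 0 ≤ μ s)
    (hmono : AntitoneOn μ (Ioi 0))
    (hint : IntegrableOn μ (Ioi 0))
    (C δ : ℝ) (hC : 1 ≤ C) (hδ : 0 < δ)
    (hdecay : ∀ t ≥ (0 : ℝ), ∀ s > (0 : ℝ), μ (t + s) ≤ C * Real.exp (-δ * t) * μ s)
    (lam : ℂ) (hlam : -(δ / 2) < lam.re)
    (η : ℝ → H)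
    (hmeas : AEStronglyMeasurable η (volume.restrict (Ioi 0)))
    (hη : IntegrableOn (fun s => μ s * ‖η s‖ ^ 2) (Ioi 0)) :
    IntegrableOn
        (fun s => μ s * ‖∫ σ in (0 : ℝ)..s, Complex.exp (-lam * (s - σ)) • η σ‖ ^ 2)
        (Ioi 0) ∧
      Real.sqrt (∫ s in Ioi (0 : ℝ),
          μ s * ‖∫ σ in (0 : ℝ)..s, Complex.exp (-lam * (s - σ)) • η σ‖ ^ 2) ≤
        (2 * Real.sqrt C / (δ + 2 * lam.re)) *
          Real.sqrt (∫ s in Ioi (0 : ℝ), μ s * ‖η s‖ ^ 2) :=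
  stmt10_general μ hpos hint C δ hC hdecay lam hlam η hmeas hη
end

section
/- Define P₂(λ) = tanh(√(λ/ℓ(λ))) / √(λ ℓ(λ)) for Re λ > 0, where ℓ(λ) = 1 + λ^{-1} ∫_0^∞ μ(s)(1 − e^{-λs}) ds and μ is non-increasing and integrable. Then P₂(λ) → 0 as Re λ → ∞, uniformly in Im λ; explicitly, |P₂(λ)| ≤ √(2/Re λ) (1 + 2/(e^{√(Re λ)} − 1)) for Re λ sufficiently large. -/
/-!
Writing `tanh w = 1 - 2 / (e^{2w} + 1)` gives `‖tanh w‖ ≤ 1 + 2 / (e^{2 Re w} - 1)`, and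
`Re √u ≥ √(Re u)` for the principal root. Since `|λ| |ℓ(λ) - 1| ≤ 2 ∫ μ`, once `Re λ ≥ 16 ∫ μ` the
point `λ / ℓ(λ)` lies within `Re λ / 7` of `λ` whatever `Im λ` is, so `Re √(λ / ℓ(λ)) ≥ √(Re λ) / 2`,
while `|λ ℓ(λ)| ≥ Re λ / 2`. Together these give the explicit bound, which tends to `0`.
-/

open MeasureTheory Set

/-- `ℓ(λ) = 1 + λ⁻¹ ∫_0^∞ μ(s)(1 − e^{−λs}) ds`. -/
noncomputable def ell (μ : ℝ → ℝ) (z : ℂ) : ℂ :=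
  1 + z⁻¹ * ∫ s in Ioi (0 : ℝ), (μ s : ℂ) * (1 - Complex.exp (-z * s))

/-- `P₂(λ) = tanh(√(λ/ℓ(λ))) / √(λ ℓ(λ))`, with principal square roots. -/
noncomputable def P2 (μ : ℝ → ℝ) (z : ℂ) : ℂ :=
  Complex.tanh ((z / ell μ z) ^ ((1 : ℂ) / 2)) / ((z * ell μ z) ^ ((1 : ℂ) / 2))

open Filter Topology

namespace Complex

lemma norm_cpow_one_div_two (x : ℂ) : ‖x ^ ((1 : ℂ) / 2)‖ = √‖x‖ := by
  rw [Real.sqrt_eq_rpow, ← norm_cpow_real]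
  norm_num

lemma sqrt_re_le_re_cpow_one_div_two (x : ℂ) : √x.re ≤ (x ^ ((1 : ℂ) / 2)).re := by
  rw [one_div, cpow_inv_two_re]
  exact Real.sqrt_le_sqrt (by linarith [re_le_norm x])

lemma tanh_eq_one_sub_two_div (w : ℂ) (h : exp (2 * w) + 1 ≠ 0) :
    tanh w = 1 - 2 / (exp (2 * w) + 1) := by
  have hw : exp w ≠ 0 := exp_ne_zero w
  have hsq : exp (2 * w) = exp w ^ 2 := by rw [← exp_nat_mul]; norm_num
  rw [hsq] at h ⊢
  rw [tanh_eq_sinh_div_cosh, sinh, cosh, exp_neg]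
  field_simp
  ring

lemma norm_tanh_le {w : ℂ} {t : ℝ} (ht : 0 < t) (htw : t ≤ 2 * w.re) :
    ‖tanh w‖ ≤ 1 + 2 / (Real.exp t - 1) := by
  have hexp : Real.exp t ≤ ‖exp (2 * w)‖ := by
    rw [norm_exp]; gcongr; simpa using htw
  have ht1 : 0 < Real.exp t - 1 := by linarith [Real.add_one_lt_exp ht.ne']
  have hden : Real.exp t - 1 ≤ ‖exp (2 * w) + 1‖ := by
    linarith [norm_sub_le_norm_add (exp (2 * w)) 1, norm_one (α := ℂ)]
  have hne : exp (2 * w) + 1 ≠ 0 := norm_pos_iff.mp (ht1.trans_le hden)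
  calc ‖tanh w‖ = ‖1 - 2 / (exp (2 * w) + 1)‖ := by rw [tanh_eq_one_sub_two_div w hne]
    _ ≤ 1 + 2 / ‖exp (2 * w) + 1‖ := by
      simpa [norm_div] using norm_sub_le (1 : ℂ) (2 / (exp (2 * w) + 1))
    _ ≤ 1 + 2 / (Real.exp t - 1) := by gcongr

end Complex

lemma norm_tanh_cpow_div_cpow_le {z ℓ : ℂ} (hz : 0 < z.re) (hℓ : ‖z‖ * ‖ℓ - 1‖ ≤ z.re / 8) :
    ‖Complex.tanh ((z / ℓ) ^ ((1 : ℂ) / 2)) / (z * ℓ) ^ ((1 : ℂ) / 2)‖ ≤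
      √(2 / z.re) * (1 + 2 / (Real.exp √z.re - 1)) := by
  have hzn : z.re ≤ ‖z‖ := Complex.re_le_norm z
  have hℓ1 : ‖ℓ - 1‖ ≤ 1 / 8 := by nlinarith [norm_nonneg (ℓ - 1)]
  have hℓn : 7 / 8 ≤ ‖ℓ‖ := by
    linarith [norm_sub_norm_le (1 : ℂ) ℓ, norm_sub_rev (1 : ℂ) ℓ, norm_one (α := ℂ)]
  have hℓ0 : ℓ ≠ 0 := norm_pos_iff.mp (by linarith)
  have hdist : ‖z / ℓ - z‖ ≤ z.re / 7 := by
    calc ‖z / ℓ - z‖ = ‖z‖ * ‖ℓ - 1‖ / ‖ℓ‖ := by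
          rw [norm_sub_rev, ← norm_mul, ← norm_div]; congr 1; field_simp
      _ ≤ (z.re / 8) / (7 / 8) := by gcongr
      _ = z.re / 7 := by ring
  have hre : z.re / 4 ≤ (z / ℓ).re := by
    have := Complex.abs_re_le_norm (z / ℓ - z)
    rw [Complex.sub_re, abs_le] at this
    linarith
  have hnum : ‖Complex.tanh ((z / ℓ) ^ ((1 : ℂ) / 2))‖ ≤ 1 + 2 / (Real.exp √z.re - 1) := by
    refine Complex.norm_tanh_le (Real.sqrt_pos.mpr hz) ?_
    have := (Real.sqrt_le_sqrt hre).trans (Complex.sqrt_re_le_re_cpow_one_div_two (z / ℓ))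
    rw [Real.sqrt_div' _ (by norm_num : (0 : ℝ) ≤ 4), show √(4 : ℝ) = 2 by
      rw [show (4 : ℝ) = 2 ^ 2 by norm_num, Real.sqrt_sq zero_le_two]] at this
    linarith
  have hden : √(z.re / 2) ≤ ‖(z * ℓ) ^ ((1 : ℂ) / 2)‖ := by
    rw [Complex.norm_cpow_one_div_two, norm_mul]
    exact Real.sqrt_le_sqrt (by nlinarith)
  calc ‖Complex.tanh ((z / ℓ) ^ ((1 : ℂ) / 2)) / (z * ℓ) ^ ((1 : ℂ) / 2)‖
      ≤ (1 + 2 / (Real.exp √z.re - 1)) / √(z.re / 2) := by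
        rw [norm_div]
        exact div_le_div₀ ((norm_nonneg _).trans hnum) hnum (by positivity) hden
    _ = √(2 / z.re) * (1 + 2 / (Real.exp √z.re - 1)) := by
        rw [div_eq_inv_mul, ← Real.sqrt_inv, inv_div]

section MemoryKernel

variable {μ : ℝ → ℝ}

lemma norm_integral_mul_one_sub_exp_le (hpos : ∀ s ∈ Ioi (0 : ℝ), 0 ≤ μ s)
    (hint : IntegrableOn μ (Ioi 0)) {z : ℂ} (hz : 0 ≤ z.re) :
    ‖∫ s in Ioi (0 : ℝ), (μ s : ℂ) * (1 - Complex.exp (-z * s))‖ ≤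
      2 * ∫ s in Ioi (0 : ℝ), μ s := by
  rw [← integral_const_mul]
  refine norm_integral_le_of_norm_le (hint.const_mul 2) ?_
  filter_upwards [ae_restrict_mem measurableSet_Ioi] with s hs
  have hexp : ‖Complex.exp (-z * s)‖ ≤ 1 := by
    rw [Complex.norm_exp, Real.exp_le_one_iff]
    simpa using mul_nonneg hz (le_of_lt hs)
  calc ‖(μ s : ℂ) * (1 - Complex.exp (-z * s))‖ = μ s * ‖1 - Complex.exp (-z * s)‖ := by
        rw [norm_mul, Complex.norm_real, Real.norm_of_nonneg (hpos s hs)]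
    _ ≤ μ s * 2 := by
        gcongr
        · exact hpos s hs
        · linarith [norm_sub_le (1 : ℂ) (Complex.exp (-z * s)), norm_one (α := ℂ)]
    _ = 2 * μ s := mul_comm _ _

lemma norm_mul_norm_ell_sub_one_le (hpos : ∀ s ∈ Ioi (0 : ℝ), 0 ≤ μ s)
    (hint : IntegrableOn μ (Ioi 0)) {z : ℂ} (hz : 0 ≤ z.re) :
    ‖z‖ * ‖ell μ z - 1‖ ≤ 2 * ∫ s in Ioi (0 : ℝ), μ s := by
  rw [ell, add_sub_cancel_left, norm_mul, ← mul_assoc, norm_inv]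
  refine le_trans ?_ (norm_integral_mul_one_sub_exp_le hpos hint hz)
  exact mul_le_of_le_one_left (norm_nonneg _) mul_inv_le_one

end MemoryKernel

lemma tendsto_sqrt_two_div_mul_atTop :
    Tendsto (fun x : ℝ ↦ √(2 / x) * (1 + 2 / (Real.exp √x - 1))) atTop (𝓝 0) := by
  have hsqrt : Tendsto (fun x : ℝ ↦ √(2 / x)) atTop (𝓝 0) := by
    simpa only [Real.sqrt_zero, id] using
      ((tendsto_const_nhds : Tendsto (fun _ : ℝ ↦ (2 : ℝ)) atTop (𝓝 2)).div_atTop tendsto_id).sqrt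
  have hexp : Tendsto (fun x : ℝ ↦ Real.exp √x - 1) atTop atTop :=
    tendsto_atTop_add_const_right _ _ (Real.tendsto_exp_atTop.comp Real.tendsto_sqrt_atTop)
  have hfac : Tendsto (fun x : ℝ ↦ 1 + 2 / (Real.exp √x - 1)) atTop (𝓝 1) := by
    simpa using tendsto_const_nhds.add (tendsto_const_nhds.div_atTop hexp)
  simpa using hsqrt.mul hfac

theorem stmt12_general (μ : ℝ → ℝ) (hpos : ∀ s ∈ Ioi (0 : ℝ), 0 ≤ μ s)
    (hint : IntegrableOn μ (Ioi 0)) :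
    (∃ R : ℝ, 0 < R ∧ ∀ z : ℂ, R ≤ z.re →
        ‖P2 μ z‖ ≤ Real.sqrt (2 / z.re) *
          (1 + 2 / (Real.exp (Real.sqrt z.re) - 1))) ∧
      ∀ ε > (0 : ℝ), ∃ R' : ℝ, ∀ z : ℂ, R' ≤ z.re → ‖P2 μ z‖ < ε := by
  set M := ∫ s in Ioi (0 : ℝ), μ s
  have hM : 0 ≤ M := setIntegral_nonneg measurableSet_Ioi hpos
  have hbound : ∀ z : ℂ, 16 * M + 1 ≤ z.re →
      ‖P2 μ z‖ ≤ √(2 / z.re) * (1 + 2 / (Real.exp √z.re - 1)) := fun z hz ↦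
    norm_tanh_cpow_div_cpow_le (by linarith)
      ((norm_mul_norm_ell_sub_one_le hpos hint (by linarith)).trans (by linarith))
  refine ⟨⟨16 * M + 1, by positivity, hbound⟩, fun ε hε ↦ ?_⟩
  obtain ⟨R, hR⟩ := eventually_atTop.mp (tendsto_sqrt_two_div_mul_atTop.eventually (gt_mem_nhds hε))
  exact ⟨max (16 * M + 1) R, fun z hz ↦
    (hbound z (le_of_max_le_left hz)).trans_lt (hR _ (le_of_max_le_right hz))⟩

/-- `P₂(λ) → 0` as `Re λ → ∞`, uniformly in `Im λ`; explicitly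
`|P₂(λ)| ≤ √(2/Re λ) (1 + 2/(e^{√(Re λ)} − 1))` for `Re λ` sufficiently large. -/
theorem stmt12 (μ : ℝ → ℝ) (hpos : ∀ s ∈ Ioi (0 : ℝ), 0 ≤ μ s)
    (hmono : AntitoneOn μ (Ioi 0))
    (hint : IntegrableOn μ (Ioi 0)) :
    (∃ R : ℝ, 0 < R ∧ ∀ z : ℂ, R ≤ z.re →
        ‖P2 μ z‖ ≤ Real.sqrt (2 / z.re) *
          (1 + 2 / (Real.exp (Real.sqrt z.re) - 1))) ∧
      ∀ ε > (0 : ℝ), ∃ R' : ℝ, ∀ z : ℂ, R' ≤ z.re → ‖P2 μ z‖ < ε :=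
  stmt12_general μ hpos hint
end

section
/- With ℓ and P₂ as defined via a non-increasing integrable μ with condition μ(t+s) ≤ C e^{-δt} μ(s), the boundary values satisfy the asymptotics P₂(is) = (1 ∓ i)/(√2 |s|^{1/2}) + O(|s|^{-3/2}) as s → ±∞. In particular, Re P₂(is) ~ 1/(√2 |s|^{1/2}) as |s| → ∞. -/
/-!
Integrability of `μ` and `|e^{-zr}| ≤ 1` on the closed right half-plane give
`z (ℓ(z) - 1) = O(1)`. For principal square roots, `(√a - √b)(√a + √b) = a - b` and
`2 (Re √w)² = |w| + Re w`, so `Re √z ≥ √(|z|/2)` and `√(zℓ) - √z = O(|z|^{-1/2})`, whence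
`1/√(zℓ) = 1/√z + O(|z|^{-3/2})`; likewise `Re √(z/ℓ) ≥ √|z|/2`, so
`tanh √(z/ℓ) = 1 + O(e^{-√|z|})`. On the imaginary axis `1/√(is) = (1 ∓ i)/√(2|s|)`.
-/

open MeasureTheory Set Filter

namespace Complex

lemma norm_cpow_inv_two (w : ℂ) : ‖w ^ (2⁻¹ : ℂ)‖ = √‖w‖ := by
  rw [show (2⁻¹ : ℂ) = ((2⁻¹ : ℝ) : ℂ) by push_cast; rfl, norm_cpow_real, Real.sqrt_eq_rpow,
    one_div]

lemma re_cpow_inv_two_nonneg (w : ℂ) : 0 ≤ (w ^ (2⁻¹ : ℂ)).re :=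
  (cpow_inv_two_re w).symm ▸ Real.sqrt_nonneg _

lemma two_mul_re_cpow_inv_two_sq (w : ℂ) : 2 * (w ^ (2⁻¹ : ℂ)).re ^ 2 = ‖w‖ + w.re := by
  rw [cpow_inv_two_re, Real.sq_sqrt (by linarith [abs_le.1 (abs_re_le_norm w)])]
  ring

lemma norm_cpow_inv_two_sub_mul_re_le (a b : ℂ) :
    ‖a ^ (2⁻¹ : ℂ) - b ^ (2⁻¹ : ℂ)‖ * (a ^ (2⁻¹ : ℂ)).re ≤ ‖a - b‖ := by
  set u := a ^ (2⁻¹ : ℂ)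
  set v := b ^ (2⁻¹ : ℂ)
  have hfac : a - b = (u - v) * (u + v) := by
    rw [← cpow_ofNat_inv_pow a 2, ← cpow_ofNat_inv_pow b 2]; ring
  calc ‖u - v‖ * u.re ≤ ‖u - v‖ * (u + v).re :=
        mul_le_mul_of_nonneg_left (by simp [re_cpow_inv_two_nonneg b, v]) (norm_nonneg _)
    _ ≤ ‖u - v‖ * ‖u + v‖ := by gcongr; exact re_le_norm _
    _ = ‖a - b‖ := by rw [hfac, norm_mul]

lemma norm_le_two_mul_re_cpow_inv_two_sq_add {z : ℂ} (hz : 0 ≤ z.re) (w : ℂ) :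
    ‖z‖ ≤ 2 * (w ^ (2⁻¹ : ℂ)).re ^ 2 + 2 * ‖w - z‖ := by
  have hre : z.re - ‖w - z‖ ≤ w.re := by linarith [abs_le.1 (abs_re_le_norm (w - z)), sub_re w z]
  linarith [two_mul_re_cpow_inv_two_sq w, norm_le_norm_add_norm_sub w z]

lemma norm_tanh_sub_one_le {q : ℂ} (hq : 1 / 2 ≤ q.re) :
    ‖tanh q - 1‖ ≤ 4 * Real.exp (-2 * q.re) := by
  set x := q.re
  have hexp : 2 * Real.exp (-x) ≤ Real.exp x := by
    have h2 : 2 ≤ Real.exp (2 * x) := by linarith [Real.add_one_le_exp (2 * x)]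
    have hsplit : Real.exp x = Real.exp (2 * x) * Real.exp (-x) := by
      rw [← Real.exp_add]; ring_nf
    rw [hsplit]; gcongr
  have hcosh : Real.exp x / 4 ≤ ‖cosh q‖ :=
    calc Real.exp x / 4 ≤ (‖exp q‖ - ‖exp (-q)‖) / 2 := by
          simp only [norm_exp, neg_re]; linarith [Real.exp_pos (-x)]
      _ ≤ ‖exp q + exp (-q)‖ / 2 := by gcongr; simpa using norm_sub_norm_le (exp q) (-exp (-q))
      _ = ‖cosh q‖ := by rw [cosh, norm_div, RCLike.norm_ofNat]
  have hcosh0 : cosh q ≠ 0 := norm_pos_iff.1 ((by positivity : 0 < Real.exp x / 4).trans_le hcosh)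
  rw [tanh_eq_sinh_div_cosh, div_sub_one hcosh0, sinh_sub_cosh, norm_div, norm_neg, norm_exp,
    div_le_iff₀ (norm_pos_iff.2 hcosh0), neg_re]
  calc Real.exp (-x) = 4 * Real.exp (-2 * x) * (Real.exp x / 4) := by
        rw [show -x = -2 * x + x by ring, Real.exp_add]; ring
    _ ≤ 4 * Real.exp (-2 * x) * ‖cosh q‖ := by gcongr

lemma re_inv_cpow_inv_two_mul_sqrt {z : ℂ} (hz : z.re = 0) (hz0 : z ≠ 0) :
    ((z ^ (2⁻¹ : ℂ))⁻¹).re * (√2 * √‖z‖) = 1 := by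
  have hρ : 0 < √‖z‖ := Real.sqrt_pos.2 (norm_pos_iff.2 hz0)
  rw [inv_re, normSq_eq_norm_sq, norm_cpow_inv_two, cpow_inv_two_re, hz, add_zero,
    Real.sqrt_div (norm_nonneg z)]
  field_simp

lemma inv_cpow_inv_two_I_mul_of_pos {s : ℝ} (hs : 0 < s) :
    ((I * s) ^ (2⁻¹ : ℂ))⁻¹ = (1 - I) / ((√2 : ℂ) * (√s : ℂ)) := by
  have hroot : (I * s) ^ (2⁻¹ : ℂ) = (√s / √2 : ℝ) * (1 + I) := by
    apply Complex.ext
    · simp [cpow_inv_two_re, abs_of_pos hs, Real.sqrt_div hs.le]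
    · simp [cpow_inv_two_im_eq_sqrt, hs.le, abs_of_pos hs, Real.sqrt_div hs.le]
  have h2 : (√2 : ℂ) ^ 2 = 2 := by norm_cast; simp
  have hs' : (√s : ℂ) ≠ 0 := by exact_mod_cast (Real.sqrt_pos.2 hs).ne'
  have h2' : (√2 : ℂ) ≠ 0 := by exact_mod_cast (Real.sqrt_pos.2 two_pos).ne'
  rw [hroot]
  push_cast
  apply inv_eq_of_mul_eq_one_right
  field_simp
  linear_combination (-1 : ℂ) * I_sq - h2

lemma inv_cpow_inv_two_I_mul_of_neg {s : ℝ} (hs : s < 0) :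
    ((I * s) ^ (2⁻¹ : ℂ))⁻¹ = (1 + I) / ((√2 : ℂ) * (√|s| : ℂ)) := by
  have hroot : (I * s) ^ (2⁻¹ : ℂ) = (√|s| / √2 : ℝ) * (1 - I) := by
    apply Complex.ext
    · simp [cpow_inv_two_re, Real.sqrt_div (abs_nonneg s)]
    · simp [cpow_inv_two_im_eq_neg_sqrt, hs, Real.sqrt_div (abs_nonneg s)]
  have h2 : (√2 : ℂ) ^ 2 = 2 := by norm_cast; simp
  have hs' : (√|s| : ℂ) ≠ 0 := by exact_mod_cast (Real.sqrt_pos.2 (abs_pos.2 hs.ne)).ne'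
  have h2' : (√2 : ℂ) ≠ 0 := by exact_mod_cast (Real.sqrt_pos.2 two_pos).ne'
  rw [hroot]
  push_cast
  apply inv_eq_of_mul_eq_one_right
  field_simp
  linear_combination (-1 : ℂ) * I_sq - h2

end Complex

lemma norm_mul_ell_sub_one_le {μ : ℝ → ℝ} (hint : IntegrableOn μ (Ioi 0)) {z : ℂ}
    (hz : 0 ≤ z.re) : ‖z * (ell μ z - 1)‖ ≤ 2 * ∫ r in Ioi 0, ‖μ r‖ := by
  rcases eq_or_ne z 0 with rfl | hz0
  · simp only [zero_mul, norm_zero]; positivity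
  have hbound : ∀ r ∈ Ioi (0 : ℝ), ‖(μ r : ℂ) * (1 - Complex.exp (-z * r))‖ ≤ 2 * ‖μ r‖ := by
    intro r hr
    have hexp : ‖Complex.exp (-z * r)‖ ≤ 1 := by
      rw [Complex.norm_exp, Real.exp_le_one_iff, neg_mul, Complex.neg_re, Complex.re_mul_ofReal,
        neg_nonpos]
      exact mul_nonneg hz hr.out.le
    rw [norm_mul, Complex.norm_real, mul_comm]
    gcongr
    linarith [norm_sub_le (1 : ℂ) (Complex.exp (-z * r)), norm_one (α := ℂ)]
  rw [ell, add_sub_cancel_left, mul_inv_cancel_left₀ hz0, ← integral_const_mul]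
  exact norm_integral_le_of_norm_le (hint.norm.const_mul 2)
    ((ae_restrict_iff' measurableSet_Ioi).2 (.of_forall hbound))

section Perturbation

open Complex

variable {z ℓ : ℂ} {M : ℝ}

lemma half_le_norm_of_norm_mul_sub_one_le (hℓ : ‖z * (ℓ - 1)‖ ≤ M) (hzM : 8 * M ≤ ‖z‖)
    (hz0 : z ≠ 0) : 1 / 2 ≤ ‖ℓ‖ := by
  have hρ : 0 < ‖z‖ := norm_pos_iff.2 hz0
  have hclose : ‖ℓ - 1‖ ≤ 1 / 8 := by
    rw [norm_mul] at hℓ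
    nlinarith
  linarith [norm_le_norm_add_norm_sub ℓ 1, norm_one (α := ℂ)]

lemma norm_inv_cpow_inv_two_mul_sub_inv_le (hz : 0 ≤ z.re) (hz0 : z ≠ 0)
    (hℓ : ‖z * (ℓ - 1)‖ ≤ M) (hℓ2 : 1 / 2 ≤ ‖ℓ‖) :
    ‖((z * ℓ) ^ (2⁻¹ : ℂ))⁻¹ - (z ^ (2⁻¹ : ℂ))⁻¹‖ ≤ 2 * M / √‖z‖ ^ 3 := by
  set u := z ^ (2⁻¹ : ℂ)
  set p := (z * ℓ) ^ (2⁻¹ : ℂ)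
  have hρ : 0 < ‖z‖ := norm_pos_iff.2 hz0
  have hu_re : ‖z‖ ≤ 2 * u.re ^ 2 := by
    simpa using norm_le_two_mul_re_cpow_inv_two_sq_add hz z
  have hp : ‖z‖ ≤ 2 * ‖p‖ ^ 2 := by
    rw [norm_cpow_inv_two, Real.sq_sqrt (norm_nonneg _), norm_mul]
    nlinarith
  have hprod : ‖z‖ ≤ 2 * (u.re * ‖p‖) := by
    refine le_of_pow_le_pow_left₀ two_ne_zero (by positivity [re_cpow_inv_two_nonneg z]) ?_
    nlinarith [mul_le_mul hu_re hp hρ.le (by positivity)]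
  have hup : ‖u - p‖ * u.re ≤ M := by
    refine (norm_cpow_inv_two_sub_mul_re_le z (z * ℓ)).trans ?_
    rwa [norm_sub_rev, ← mul_sub_one]
  have hu0 : 0 < ‖u‖ := by rw [norm_cpow_inv_two]; positivity
  have hp0 : 0 < ‖p‖ := by nlinarith [norm_nonneg p]
  rw [inv_sub_inv (norm_pos_iff.1 hp0) (norm_pos_iff.1 hu0), norm_div, norm_mul,
    norm_cpow_inv_two z, pow_succ, Real.sq_sqrt (norm_nonneg z),
    div_le_div_iff₀ (by positivity) (by positivity)]
  calc ‖u - p‖ * (‖z‖ * √‖z‖) ≤ ‖u - p‖ * (2 * (u.re * ‖p‖)) * √‖z‖ := by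
        rw [← mul_assoc]; gcongr
    _ = 2 * (‖u - p‖ * u.re) * (‖p‖ * √‖z‖) := by ring
    _ ≤ 2 * M * (‖p‖ * √‖z‖) := by gcongr

lemma norm_tanh_cpow_inv_two_div_sub_one_le (hz : 0 ≤ z.re) (hℓ : ‖z * (ℓ - 1)‖ ≤ M)
    (hℓ2 : 1 / 2 ≤ ‖ℓ‖) (hzM : 8 * M ≤ ‖z‖) (hz1 : 1 ≤ ‖z‖) :
    ‖tanh ((z / ℓ) ^ (2⁻¹ : ℂ)) - 1‖ ≤ 24 / √‖z‖ ^ 3 := by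
  set q := (z / ℓ) ^ (2⁻¹ : ℂ)
  set t := √‖z‖
  have ht : t ^ 2 = ‖z‖ := Real.sq_sqrt (norm_nonneg z)
  have ht1 : 1 ≤ t := Real.one_le_sqrt.2 hz1
  have hdiv : ‖z / ℓ - z‖ ≤ 2 * M := by
    have hℓ0 : ℓ ≠ 0 := norm_pos_iff.1 (by linarith)
    rw [show z / ℓ - z = -(z * (ℓ - 1)) / ℓ by field_simp; ring, norm_div, norm_neg,
      div_le_iff₀ (norm_pos_iff.2 hℓ0)]
    nlinarith [norm_nonneg (z * (ℓ - 1))]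
  have hq : t / 2 ≤ q.re := by
    have hsq : ‖z‖ ≤ 2 * q.re ^ 2 + 2 * ‖z / ℓ - z‖ :=
      norm_le_two_mul_re_cpow_inv_two_sq_add hz (z / ℓ)
    refine le_of_pow_le_pow_left₀ two_ne_zero (re_cpow_inv_two_nonneg _) ?_
    nlinarith
  have hexp : t ^ 3 / 6 ≤ Real.exp t := by
    simpa [Nat.factorial] using Real.pow_div_factorial_le_exp t (by positivity) 3
  calc ‖tanh q - 1‖ ≤ 4 * Real.exp (-2 * q.re) := norm_tanh_sub_one_le (by linarith)
    _ ≤ 4 * Real.exp (-t) := by gcongr; linarith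
    _ ≤ 24 / t ^ 3 := by
      rw [Real.exp_neg, ← div_eq_mul_inv, div_le_div_iff₀ (Real.exp_pos t) (by positivity)]
      linarith

lemma norm_tanh_div_cpow_inv_two_sub_inv_le (hz : 0 ≤ z.re) (hℓ : ‖z * (ℓ - 1)‖ ≤ M)
    (hzM : 8 * M ≤ ‖z‖) (hz2 : 2 ≤ ‖z‖) :
    ‖tanh ((z / ℓ) ^ (2⁻¹ : ℂ)) / (z * ℓ) ^ (2⁻¹ : ℂ) - (z ^ (2⁻¹ : ℂ))⁻¹‖ ≤
      (24 + 2 * M) / √‖z‖ ^ 3 := by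
  have hz0 : z ≠ 0 := norm_pos_iff.1 (by linarith)
  have hℓ2 := half_le_norm_of_norm_mul_sub_one_le hℓ hzM hz0
  set q := (z / ℓ) ^ (2⁻¹ : ℂ)
  set p := (z * ℓ) ^ (2⁻¹ : ℂ)
  set u := z ^ (2⁻¹ : ℂ)
  have hp : 1 ≤ ‖p‖ := by
    rw [norm_cpow_inv_two, norm_mul, Real.one_le_sqrt]
    nlinarith
  calc ‖tanh q / p - u⁻¹‖ = ‖(tanh q - 1) / p + (p⁻¹ - u⁻¹)‖ := by congr 1; ring
    _ ≤ ‖tanh q - 1‖ + ‖p⁻¹ - u⁻¹‖ := by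
      refine (norm_add_le _ _).trans (add_le_add_left ?_ _)
      rw [norm_div]
      exact div_le_self (norm_nonneg _) hp
    _ ≤ 24 / √‖z‖ ^ 3 + 2 * M / √‖z‖ ^ 3 :=
      add_le_add (norm_tanh_cpow_inv_two_div_sub_one_le hz hℓ hℓ2 hzM (by linarith))
        (norm_inv_cpow_inv_two_mul_sub_inv_le hz hz0 hℓ hℓ2)
    _ = (24 + 2 * M) / √‖z‖ ^ 3 := by ring

end Perturbation

lemma Real.rpow_neg_three_div_two {x : ℝ} (hx : 0 ≤ x) : x ^ (-(3 : ℝ) / 2) = (√x ^ 3)⁻¹ := by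
  rw [Real.sqrt_eq_rpow, ← Real.rpow_natCast, ← Real.rpow_mul hx, ← Real.rpow_neg hx]
  norm_num

theorem exists_norm_P2_sub_inv_cpow_inv_two_le {μ : ℝ → ℝ} (hint : IntegrableOn μ (Ioi 0)) :
    ∃ K R : ℝ, 0 < K ∧ 0 < R ∧ ∀ z : ℂ, 0 ≤ z.re → R ≤ ‖z‖ →
      ‖P2 μ z - (z ^ (2⁻¹ : ℂ))⁻¹‖ ≤ K * ‖z‖ ^ (-(3 : ℝ) / 2) := by
  set M := 2 * ∫ r in Ioi 0, ‖μ r‖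
  have hM : 0 ≤ M :=
    mul_nonneg zero_le_two (setIntegral_nonneg measurableSet_Ioi fun _ _ => norm_nonneg _)
  refine ⟨24 + 2 * M, max 2 (8 * M), by positivity, by positivity, fun z hz hR => ?_⟩
  rw [Real.rpow_neg_three_div_two (norm_nonneg z), ← div_eq_mul_inv]
  simpa only [P2, one_div] using norm_tanh_div_cpow_inv_two_sub_inv_le hz
    (norm_mul_ell_sub_one_le hint hz) (le_of_max_le_right hR) (le_of_max_le_left hR)

theorem exists_norm_P2_I_mul_sub_inv_cpow_inv_two_le {μ : ℝ → ℝ}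
    (hint : IntegrableOn μ (Ioi 0)) :
    ∃ K R : ℝ, 0 < K ∧ 0 < R ∧ ∀ s : ℝ, R ≤ |s| →
      ‖P2 μ (Complex.I * s) - ((Complex.I * s) ^ (2⁻¹ : ℂ))⁻¹‖ ≤ K * |s| ^ (-(3 : ℝ) / 2) := by
  obtain ⟨K, R, hK, hR, hbound⟩ := exists_norm_P2_sub_inv_cpow_inv_two_le hint
  refine ⟨K, R, hK, hR, fun s hs => ?_⟩
  simpa using hbound (Complex.I * s) (by simp) (by simpa using hs)

theorem tendsto_re_P2_I_mul_mul_sqrt {μ : ℝ → ℝ} (hint : IntegrableOn μ (Ioi 0))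
    {l : Filter ℝ} (hl : Tendsto (fun s : ℝ => |s|) l atTop) :
    Tendsto (fun s : ℝ => (P2 μ (Complex.I * s)).re * (√2 * √|s|)) l (nhds 1) := by
  obtain ⟨K, R, -, hR, hbound⟩ := exists_norm_P2_I_mul_sub_inv_cpow_inv_two_le hint
  have hclose : ∀ s : ℝ, R ≤ |s| →
      ‖(P2 μ (Complex.I * s)).re * (√2 * √|s|) - 1‖ ≤ √2 * K / |s| := by
    intro s hs
    set z := Complex.I * s
    have hs0 : 0 < |s| := hR.trans_le hs
    have hz : ‖z‖ = |s| := by simp [z]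
    have hroot := Complex.re_inv_cpow_inv_two_mul_sqrt (z := z) (by simp [z])
      (by simpa [z] using hs0.ne')
    rw [hz] at hroot
    calc ‖(P2 μ z).re * (√2 * √|s|) - 1‖
        = |(P2 μ z - (z ^ (2⁻¹ : ℂ))⁻¹).re| * (√2 * √|s|) := by
          rw [Real.norm_eq_abs, ← hroot, ← sub_mul, abs_mul,
            abs_of_nonneg (by positivity : 0 ≤ √2 * √|s|), Complex.sub_re]
      _ ≤ K * |s| ^ (-(3 : ℝ) / 2) * (√2 * √|s|) := by
          gcongr
          exact (Complex.abs_re_le_norm _).trans (hbound s hs)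
      _ = √2 * K / |s| := by
          rw [Real.rpow_neg_three_div_two (abs_nonneg s), pow_succ, Real.sq_sqrt (abs_nonneg s)]
          field_simp
  rw [← tendsto_sub_nhds_zero_iff]
  refine squeeze_zero_norm' ?_ ((tendsto_const_nhds (x := √2 * K)).div_atTop hl)
  filter_upwards [hl.eventually_ge_atTop R] with s hs using hclose s hs

theorem stmt13_general (μ : ℝ → ℝ)
    (hint : IntegrableOn μ (Ioi 0)) :
    (∃ K R : ℝ, 0 < K ∧ 0 < R ∧
        (∀ s : ℝ, R ≤ s →
          ‖P2 μ (Complex.I * s) - (1 - Complex.I) / ((Real.sqrt 2 : ℂ) * (Real.sqrt s : ℂ))‖ ≤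
            K * |s| ^ (-(3 : ℝ) / 2)) ∧
        (∀ s : ℝ, s ≤ -R →
          ‖P2 μ (Complex.I * s) - (1 + Complex.I) / ((Real.sqrt 2 : ℂ) * (Real.sqrt |s| : ℂ))‖ ≤
            K * |s| ^ (-(3 : ℝ) / 2))) ∧
      Tendsto (fun s : ℝ => (P2 μ (Complex.I * s)).re * (Real.sqrt 2 * Real.sqrt |s|))
        atTop (nhds 1) ∧
      Tendsto (fun s : ℝ => (P2 μ (Complex.I * s)).re * (Real.sqrt 2 * Real.sqrt |s|))
        atBot (nhds 1) := by
  obtain ⟨K, R, hK, hR, hbound⟩ := exists_norm_P2_I_mul_sub_inv_cpow_inv_two_le hint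
  refine ⟨⟨K, R, hK, hR, fun s hs => ?_, fun s hs => ?_⟩,
    tendsto_re_P2_I_mul_mul_sqrt hint tendsto_abs_atTop_atTop,
    tendsto_re_P2_I_mul_mul_sqrt hint tendsto_abs_atBot_atTop⟩
  · rw [← Complex.inv_cpow_inv_two_I_mul_of_pos (hR.trans_le hs)]
    exact hbound s (hs.trans (le_abs_self s))
  · rw [← Complex.inv_cpow_inv_two_I_mul_of_neg (by linarith)]
    exact hbound s (by rw [abs_of_neg (by linarith)]; linarith)

/-- Boundary asymptotics: `P₂(is) = (1 ∓ i)/(√2 |s|^{1/2}) + O(|s|^{-3/2})` as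
`s → ±∞`; in particular `Re P₂(is) ∼ 1/(√2 |s|^{1/2})` as `|s| → ∞`. -/
theorem stmt13 (μ : ℝ → ℝ) (hpos : ∀ s ∈ Ioi (0 : ℝ), 0 ≤ μ s)
    (hmono : AntitoneOn μ (Ioi 0))
    (hint : IntegrableOn μ (Ioi 0))
    (C δ : ℝ) (hC : 1 ≤ C) (hδ : 0 < δ)
    (hdecay : ∀ t ≥ (0 : ℝ), ∀ s > (0 : ℝ), μ (t + s) ≤ C * Real.exp (-δ * t) * μ s) :
    (∃ K R : ℝ, 0 < K ∧ 0 < R ∧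
        (∀ s : ℝ, R ≤ s →
          ‖P2 μ (Complex.I * s) - (1 - Complex.I) / ((Real.sqrt 2 : ℂ) * (Real.sqrt s : ℂ))‖ ≤
            K * |s| ^ (-(3 : ℝ) / 2)) ∧
        (∀ s : ℝ, s ≤ -R →
          ‖P2 μ (Complex.I * s) - (1 + Complex.I) / ((Real.sqrt 2 : ℂ) * (Real.sqrt |s| : ℂ))‖ ≤
            K * |s| ^ (-(3 : ℝ) / 2))) ∧
      Tendsto (fun s : ℝ => (P2 μ (Complex.I * s)).re * (Real.sqrt 2 * Real.sqrt |s|))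
        atTop (nhds 1) ∧
      Tendsto (fun s : ℝ => (P2 μ (Complex.I * s)).re * (Real.sqrt 2 * Real.sqrt |s|))
        atBot (nhds 1) :=
  stmt13_general μ hint
end

section
/- Let (T(t))_{t≥0} be a contraction semigroup with generator A on a Hilbert space Z such that σ(A) ⊂ {Re λ < 0} and limsup_{s→∞} s^{−1/2} ‖R(is, A)‖ > 0. Then for every non-increasing function r : [0,∞) → (0,∞) with r(t) = o(t^{−2}) as t → ∞, there exists z₀ ∈ D(A) such that limsup_{t→∞} ‖T(t)z₀‖ / r(t) = ∞. -/
open Complex Set Filter Asymptotics Topology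

/-!
If every orbit starting in `D(A) = range R(0, A)` were `O(r)`, uniform boundedness would give
`‖T(t) R(0, A)‖ ≤ C r(t)`. For `Re λ ≥ 0` and `z = R(λ, A) y`, Duhamel's formula
`z = e^{-λτ} T(τ) z + ∫₀^τ e^{-λt} T(t) y dt` gives `‖z‖ ≤ τ ‖y‖ + ‖T(τ) z‖`, and writing
`z = R(0, A) (y - λ z)` bounds the last term by `C r(τ) (‖y‖ + |λ| ‖z‖)`. Since `r = o(t⁻²)`,
the choice `τ = (δ/4) √s` makes `C r(τ) s` small, so `‖R(is, A)‖ ≤ δ √s` for large `s`,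
contradicting `limsup s^{-1/2} ‖R(is, A)‖ > 0`.
-/

theorem tendsto_mul_sq_of_isLittleO_rpow_neg_two {r : ℝ → ℝ}
    (hro : r =o[atTop] fun t => t ^ (-2 : ℝ)) : Tendsto (fun t => r t * t ^ 2) atTop (𝓝 0) := by
  refine hro.tendsto_div_nhds_zero.congr' ((eventually_gt_atTop 0).mono fun t ht => ?_)
  simp [Real.rpow_neg_ofNat, div_eq_mul_inv]

section Semigroup

variable {Z : Type*} [NormedAddCommGroup Z] [NormedSpace ℂ Z]
  {dom : Submodule ℂ Z} {A : dom →ₗ[ℂ] Z} {T : ℝ → Z →L[ℂ] Z}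

theorem hasDerivWithinAt_orbit (hT0 : T 0 = ContinuousLinearMap.id ℂ Z)
    (hTsem : ∀ s ≥ (0 : ℝ), ∀ t ≥ (0 : ℝ), T (s + t) = (T s).comp (T t))
    (hgen : ∀ z : dom, HasDerivWithinAt (fun t => T t (z : Z)) (A z) (Ici 0) 0)
    (z : dom) {x : ℝ} (hx : 0 ≤ x) :
    HasDerivWithinAt (fun t => T t (z : Z)) (T x (A z)) (Ici x) x := by
  have hshift : HasDerivWithinAt (fun u => T (u - x) (z : Z)) (A z) (Ici x) x := by
    have hsub : HasDerivWithinAt (fun u : ℝ => u - x) 1 (Ici x) x :=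
      (hasDerivWithinAt_id x _).sub_const x
    simpa [Function.comp_def] using (hgen z).scomp_of_eq x hsub
      (fun u (hu : x ≤ u) => sub_nonneg.mpr hu) (sub_self x).symm
  have hmap := ((T x).restrictScalars ℝ).hasFDerivAt.comp_hasDerivWithinAt x hshift
  refine hmap.congr (fun u (hu : x ≤ u) => ?_) (by simp [hT0])
  simp [← ContinuousLinearMap.comp_apply, ← hTsem x hx (u - x) (sub_nonneg.mpr hu)]

theorem eq_cexp_smul_add_integral [CompleteSpace Z] (hT0 : T 0 = ContinuousLinearMap.id ℂ Z)
    (hTsem : ∀ s ≥ (0 : ℝ), ∀ t ≥ (0 : ℝ), T (s + t) = (T s).comp (T t))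
    (hTcont : ∀ z : Z, ContinuousOn (fun t => T t z) (Ici 0))
    (hgen : ∀ z : dom, HasDerivWithinAt (fun t => T t (z : Z)) (A z) (Ici 0) 0)
    {lam : ℂ} {z : dom} {y : Z} (hz : lam • (z : Z) - A z = y) {τ : ℝ} (hτ : 0 ≤ τ) :
    (z : Z) = cexp (-lam * τ) • T τ z + ∫ t in (0 : ℝ)..τ, cexp (-lam * t) • T t y := by
  have hexp : ∀ t : ℝ, HasDerivAt (fun t : ℝ => cexp (-lam * t)) (-lam * cexp (-lam * t)) t :=
    fun t => by simpa [mul_comm] using ((hasDerivAt_id (t : ℂ)).const_mul (-lam)).cexp.comp_ofReal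
  have hcont : Continuous fun t : ℝ => cexp (-lam * t) := by fun_prop
  have hderiv : ∀ x ∈ Ioo 0 τ, HasDerivWithinAt (fun t : ℝ => cexp (-lam * t) • T t (z : Z))
      (-(cexp (-lam * x) • T x y)) (Ioi x) x := by
    intro x hx
    have := ((hexp x).hasDerivWithinAt (s := Ioi x)).smul
      ((hasDerivWithinAt_orbit hT0 hTsem hgen z hx.1.le).mono Ioi_subset_Ici_self)
    convert this using 1
    · rfl
    rw [← hz]
    simp only [map_sub, map_smul, smul_sub, smul_smul]
    module
  have hint : IntervalIntegrable (fun t : ℝ => cexp (-lam * t) • T t y) MeasureTheory.volume 0 τ :=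
    ((hcont.continuousOn.smul (hTcont y)).mono Icc_subset_Ici_self).intervalIntegrable_of_Icc hτ
  have hftc := intervalIntegral.integral_eq_sub_of_hasDeriv_right_of_le hτ
    ((hcont.continuousOn.smul (hTcont z)).mono Icc_subset_Ici_self) hderiv hint.neg
  simp only [Pi.smul_apply', intervalIntegral.integral_neg, ofReal_zero, mul_zero,
    Complex.exp_zero, hT0, one_smul, neg_eq_iff_eq_neg, neg_sub] at hftc
  rw [hftc, ContinuousLinearMap.id_apply, add_sub_cancel]

theorem norm_le_mul_norm_add_norm_apply [CompleteSpace Z] (hT0 : T 0 = ContinuousLinearMap.id ℂ Z)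
    (hTsem : ∀ s ≥ (0 : ℝ), ∀ t ≥ (0 : ℝ), T (s + t) = (T s).comp (T t))
    (hTcontr : ∀ t ≥ (0 : ℝ), ‖T t‖ ≤ 1)
    (hTcont : ∀ z : Z, ContinuousOn (fun t => T t z) (Ici 0))
    (hgen : ∀ z : dom, HasDerivWithinAt (fun t => T t (z : Z)) (A z) (Ici 0) 0)
    {lam : ℂ} (hlam : 0 ≤ lam.re) {z : dom} {y : Z} (hz : lam • (z : Z) - A z = y)
    {τ : ℝ} (hτ : 0 ≤ τ) :
    ‖(z : Z)‖ ≤ τ * ‖y‖ + ‖T τ z‖ := by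
  have hexp : ∀ t : ℝ, 0 ≤ t → ‖cexp (-lam * t)‖ ≤ 1 := fun t ht => by
    simpa [Complex.norm_exp] using mul_nonneg hlam ht
  have hint : ‖∫ t in (0 : ℝ)..τ, cexp (-lam * t) • T t y‖ ≤ ‖y‖ * |τ - 0| := by
    refine intervalIntegral.norm_integral_le_of_norm_le_const fun t ht => ?_
    rw [uIoc_of_le hτ] at ht
    rw [norm_smul]
    calc ‖cexp (-lam * t)‖ * ‖T t y‖ ≤ 1 * (1 * ‖y‖) := by
          gcongr
          · exact hexp t ht.1.le
          · exact (T t).le_of_opNorm_le (hTcontr t ht.1.le) y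
      _ = ‖y‖ := by ring
  rw [sub_zero, abs_of_nonneg hτ] at hint
  calc ‖(z : Z)‖ ≤ ‖cexp (-lam * τ) • T τ z‖ + ‖∫ t in (0 : ℝ)..τ, cexp (-lam * t) • T t y‖ := by
        conv_lhs => rw [eq_cexp_smul_add_integral hT0 hTsem hTcont hgen hz hτ]
        exact norm_add_le _ _
    _ ≤ 1 * ‖T τ z‖ + ‖y‖ * τ := by
        rw [norm_smul]; gcongr; exact hexp τ hτ
    _ = τ * ‖y‖ + ‖T τ z‖ := by ring

theorem norm_res_le_of_norm_comp_res_zero_le [CompleteSpace Z]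
    (hT0 : T 0 = ContinuousLinearMap.id ℂ Z)
    (hTsem : ∀ s ≥ (0 : ℝ), ∀ t ≥ (0 : ℝ), T (s + t) = (T s).comp (T t))
    (hTcontr : ∀ t ≥ (0 : ℝ), ‖T t‖ ≤ 1)
    (hTcont : ∀ z : Z, ContinuousOn (fun t => T t z) (Ici 0))
    (hgen : ∀ z : dom, HasDerivWithinAt (fun t => T t (z : Z)) (A z) (Ici 0) 0)
    {res : ℂ → Z →L[ℂ] Z} {lam : ℂ} (hlam : 0 ≤ lam.re)
    (hres_lam : ∀ y : Z, ∃ h : res lam y ∈ dom, lam • (res lam y) - A ⟨res lam y, h⟩ = y)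
    (hres_zero : ∀ z : dom, res 0 ((0 : ℂ) • (z : Z) - A z) = (z : Z))
    {τ β : ℝ} (hτ : 0 ≤ τ) (hβ : ‖(T τ).comp (res 0)‖ ≤ β) (hsmall : β * ‖lam‖ ≤ 1 / 2) :
    ‖res lam‖ ≤ 2 * (τ + β) := by
  have hβ0 : 0 ≤ β := (norm_nonneg _).trans hβ
  refine (res lam).opNorm_le_bound (by positivity) fun y => ?_
  obtain ⟨hw, hweq⟩ := hres_lam y
  set w := res lam y
  have hduhamel : ‖w‖ ≤ τ * ‖y‖ + ‖T τ w‖ :=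
    norm_le_mul_norm_add_norm_apply hT0 hTsem hTcontr hTcont hgen hlam (z := ⟨w, hw⟩) hweq hτ
  have hw_eq : res 0 (y - lam • w) = w := by
    rw [← hweq, sub_sub_cancel_left, ← zero_sub, ← zero_smul ℂ w]
    exact hres_zero ⟨w, hw⟩
  have hTw : ‖T τ w‖ ≤ β * (‖y‖ + ‖lam‖ * ‖w‖) :=
    calc ‖T τ w‖ = ‖(T τ).comp (res 0) (y - lam • w)‖ := by
          rw [ContinuousLinearMap.comp_apply, hw_eq]
      _ ≤ β * ‖y - lam • w‖ := (T τ).comp (res 0) |>.le_of_opNorm_le hβ _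
      _ ≤ β * (‖y‖ + ‖lam‖ * ‖w‖) := by
          gcongr
          exact (norm_sub_le _ _).trans_eq (by rw [norm_smul])
  have := mul_le_mul_of_nonneg_right hsmall (norm_nonneg w)
  nlinarith [norm_nonneg y]

theorem exists_norm_comp_le_mul_of_forall_bounded [CompleteSpace Z]
    (hTcontr : ∀ t ≥ (0 : ℝ), ‖T t‖ ≤ 1) (R : Z →L[ℂ] Z) {r : ℝ → ℝ} (hr : ∀ t, 0 < r t)
    (hanti : Antitone r) (hbdd : ∀ y : Z, ∃ M t₀ : ℝ, ∀ t ≥ t₀, ‖T t (R y)‖ / r t < M) :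
    ∃ C, ∀ t ≥ 0, ‖(T t).comp R‖ ≤ C * r t := by
  have hnorm : ∀ t y, ‖((r t)⁻¹ • (T t).comp R) y‖ = ‖T t (R y)‖ / r t := fun t y => by
    simp [norm_smul, abs_of_pos (hr t), div_eq_inv_mul]
  have hpt : ∀ y, ∃ M, ∀ t : Ici (0 : ℝ), ‖((r t)⁻¹ • (T t).comp R) y‖ ≤ M := by
    intro y
    obtain ⟨M, t₀, hM⟩ := hbdd y
    refine ⟨max M (‖R y‖ / r (max t₀ 0)), fun ⟨t, (ht : 0 ≤ t)⟩ => ?_⟩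
    rw [hnorm]
    rcases le_total (max t₀ 0) t with h | h
    · exact (hM t (le_of_max_le_left h)).le.trans (le_max_left _ _)
    · refine le_trans ?_ (le_max_right _ _)
      refine div_le_div₀ (norm_nonneg _) ?_ (hr _) (hanti h)
      simpa using (T t).le_of_opNorm_le (hTcontr t ht) (R y)
  obtain ⟨C, hC⟩ := banach_steinhaus hpt
  refine ⟨C, fun t ht => ?_⟩
  have := hC ⟨t, ht⟩
  rw [norm_smul, norm_inv, Real.norm_of_nonneg (hr t).le, inv_mul_le_iff₀ (hr t)] at this
  exact this.trans_eq (mul_comm _ _)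

theorem isLittleO_norm_res_sqrt [CompleteSpace Z]
    (hT0 : T 0 = ContinuousLinearMap.id ℂ Z)
    (hTsem : ∀ s ≥ (0 : ℝ), ∀ t ≥ (0 : ℝ), T (s + t) = (T s).comp (T t))
    (hTcontr : ∀ t ≥ (0 : ℝ), ‖T t‖ ≤ 1)
    (hTcont : ∀ z : Z, ContinuousOn (fun t => T t z) (Ici 0))
    (hgen : ∀ z : dom, HasDerivWithinAt (fun t => T t (z : Z)) (A z) (Ici 0) 0)
    {res : ℂ → Z →L[ℂ] Z}
    (hres : ∀ lam : ℂ, 0 ≤ lam.re →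
      (∀ y : Z, ∃ h : res lam y ∈ dom, lam • (res lam y) - A ⟨res lam y, h⟩ = y) ∧
      (∀ z : dom, res lam (lam • (z : Z) - A z) = (z : Z)))
    {r : ℝ → ℝ} {C : ℝ} (hC : ∀ t ≥ 0, ‖(T t).comp (res 0)‖ ≤ C * r t)
    (hro : r =o[atTop] fun t => t ^ (-2 : ℝ)) :
    (fun s : ℝ => ‖res (s * I)‖) =o[atTop] Real.sqrt := by
  refine IsLittleO.of_bound fun δ hδ => ?_
  set τ : ℝ → ℝ := fun s => δ / 4 * √s
  have hτ : Tendsto τ atTop atTop := Real.tendsto_sqrt_atTop.const_mul_atTop (by positivity)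
  have hsmall : Tendsto (fun s => C * r (τ s) * s) atTop (𝓝 0) := by
    have := ((tendsto_mul_sq_of_isLittleO_rpow_neg_two hro).comp hτ).const_mul (C / (δ / 4) ^ 2)
    rw [mul_zero] at this
    refine this.congr' ((eventually_ge_atTop 0).mono fun s hs => ?_)
    simp only [Function.comp_apply, τ, mul_pow, Real.sq_sqrt hs]
    field_simp
  filter_upwards [eventually_ge_atTop 1,
    hsmall.eventually_le_const (lt_min one_half_pos (by positivity : 0 < δ / 4))] with s hs1 hs
  have hs0 : 0 ≤ s := zero_le_one.trans hs1
  have hsqrt : 1 ≤ √s := Real.one_le_sqrt.mpr hs1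
  have hβ0 : 0 ≤ C * r (τ s) := (norm_nonneg _).trans (hC (τ s) (by positivity))
  have hnorm : ‖(s : ℂ) * I‖ = s := by simp [abs_of_nonneg hs0]
  have hbound := norm_res_le_of_norm_comp_res_zero_le hT0 hTsem hTcontr hTcont hgen
    (lam := s * I) (by simp) (hres _ (by simp)).1 (hres 0 le_rfl).2 (by positivity)
    (hC (τ s) (by positivity)) (by rw [hnorm]; exact hs.trans (min_le_left _ _))
  have hs' := hs.trans (min_le_right _ _)
  rw [norm_norm, Real.norm_of_nonneg (Real.sqrt_nonneg s)]
  have hτs : τ s = δ / 4 * √s := rfl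
  nlinarith [mul_le_mul_of_nonneg_left hs1 hβ0, mul_le_mul_of_nonneg_left hsqrt hδ.le]

end Semigroup

theorem stmt18_general {Z : Type*} [NormedAddCommGroup Z] [InnerProductSpace ℂ Z] [CompleteSpace Z]
    (dom : Submodule ℂ Z) (A : dom →ₗ[ℂ] Z)
    (T : ℝ → Z →L[ℂ] Z)
    (hT0 : T 0 = ContinuousLinearMap.id ℂ Z)
    (hTsem : ∀ s ≥ (0 : ℝ), ∀ t ≥ (0 : ℝ), T (s + t) = (T s).comp (T t))
    (hTcontr : ∀ t ≥ (0 : ℝ), ‖T t‖ ≤ 1)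
    (hTcont : ∀ z : Z, ContinuousOn (fun t => T t z) (Ici 0))
    (hgen : ∀ z : dom, HasDerivWithinAt (fun t => T t (z : Z)) (A z) (Ici 0) 0)
    (res : ℂ → Z →L[ℂ] Z)
    (hres : ∀ lam : ℂ, 0 ≤ lam.re →
      (∀ y : Z, ∃ h : res lam y ∈ dom, lam • (res lam y) - A ⟨res lam y, h⟩ = y) ∧
      (∀ z : dom, res lam (lam • (z : Z) - A z) = (z : Z)))
    (hlimsup : ∃ c > (0 : ℝ), ∀ s₀ : ℝ, ∃ s ≥ s₀, 0 < s ∧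
      c * Real.sqrt s ≤ ‖res ((s : ℂ) * Complex.I)‖) :
    ∀ r : ℝ → ℝ, (∀ t, 0 < r t) → Antitone r →
      (fun t => r t) =o[atTop] (fun t : ℝ => t ^ (-2 : ℝ)) →
      ∃ z₀ : dom, ∀ M : ℝ, ∀ t₀ : ℝ, ∃ t ≥ t₀, M ≤ ‖T t (z₀ : Z)‖ / r t := by
  intro r hr hanti hro
  by_contra! hbdd
  obtain ⟨C, hC⟩ := exists_norm_comp_le_mul_of_forall_bounded hTcontr (res 0) hr hanti
    fun y => hbdd ⟨res 0 y, ((hres 0 le_rfl).1 y).1⟩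
  obtain ⟨c, hc, hfreq⟩ := hlimsup
  obtain ⟨s₀, hs₀⟩ := eventually_atTop.mp
    ((isLittleO_norm_res_sqrt hT0 hTsem hTcontr hTcont hgen hres hC hro).def (half_pos hc))
  obtain ⟨s, hs, hspos, hcs⟩ := hfreq s₀
  have hsmall := hs₀ s hs
  rw [norm_norm, Real.norm_of_nonneg (Real.sqrt_nonneg s)] at hsmall
  nlinarith [Real.sqrt_pos.mpr hspos]

/-- Let `(T(t))` be a contraction semigroup with generator `A` (domain `dom`) on a
complex Hilbert space `Z` such that `σ(A) ⊂ {Re λ < 0}` (i.e. every `λ` with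
`Re λ ≥ 0` has a bounded two-sided resolvent `res λ`) and
`limsup_{s→∞} s^{−1/2} ‖R(is,A)‖ > 0`.  Then for every non-increasing
`r : [0,∞) → (0,∞)` with `r(t) = o(t^{−2})` there is `z₀ ∈ D(A)` with
`limsup_{t→∞} ‖T(t)z₀‖/r(t) = ∞`. -/
theorem stmt18 {Z : Type*} [NormedAddCommGroup Z] [InnerProductSpace ℂ Z] [CompleteSpace Z]
    (dom : Submodule ℂ Z) (A : dom →ₗ[ℂ] Z)
    (hdense : Dense (dom : Set Z))
    (T : ℝ → Z →L[ℂ] Z)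
    (hT0 : T 0 = ContinuousLinearMap.id ℂ Z)
    (hTsem : ∀ s ≥ (0 : ℝ), ∀ t ≥ (0 : ℝ), T (s + t) = (T s).comp (T t))
    (hTcontr : ∀ t ≥ (0 : ℝ), ‖T t‖ ≤ 1)
    (hTcont : ∀ z : Z, ContinuousOn (fun t => T t z) (Ici 0))
    (hgen : ∀ z : dom, HasDerivWithinAt (fun t => T t (z : Z)) (A z) (Ici 0) 0)
    (res : ℂ → Z →L[ℂ] Z)
    (hres : ∀ lam : ℂ, 0 ≤ lam.re →
      (∀ y : Z, ∃ h : res lam y ∈ dom, lam • (res lam y) - A ⟨res lam y, h⟩ = y) ∧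
      (∀ z : dom, res lam (lam • (z : Z) - A z) = (z : Z)))
    (hlimsup : ∃ c > (0 : ℝ), ∀ s₀ : ℝ, ∃ s ≥ s₀, 0 < s ∧
      c * Real.sqrt s ≤ ‖res ((s : ℂ) * Complex.I)‖) :
    ∀ r : ℝ → ℝ, (∀ t, 0 < r t) → Antitone r →
      (fun t => r t) =o[atTop] (fun t : ℝ => t ^ (-2 : ℝ)) →
      ∃ z₀ : dom, ∀ M : ℝ, ∀ t₀ : ℝ, ∃ t ≥ t₀, M ≤ ‖T t (z₀ : Z)‖ / r t :=
  stmt18_general dom A T hT0 hTsem hTcontr hTcont hgen res hres hlimsup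
end
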